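/- arXiv:1309.5530 — 2 statements merged into one kernel-verified Lean document; each statement's English description precedes it below -/
import Mathlib

section
/- Sum over all ordered matchings: Σ_{π∈Π'} (-q)^{ℓ(π)} b_{i_1 j_1} ··· b_{i_n j_n} = (Σ_{σ∈S_n} q^{4ℓ(σ)}) [1,2,...,2n], where Π' is the set of all sequences of pairs {(i_1,j_1),...,(i_n,j_n)} partitioning {1,...,2n} with i_k < j_k (but no ordering condition on the i_k), and ℓ(π) is the inversion number of the associated permutation. -/
/-- The inversion number `ℓ(σ)` of a permutation. -/
def inversionNumber {n : ℕ} (σ : Equiv.Perm (Fin n)) : ℕ :=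
  ((Finset.univ : Finset (Fin n × Fin n)).filter
    (fun p => p.1 < p.2 ∧ σ p.2 < σ p.1)).card

/-- Auxiliary recursion for the quantum Pfaffian: `k` steps of the inductive expansion
`[S] = Σ_{j ∈ S, j ≠ min S} (-q)^{rank_S(j) - 2} b_{min S, j} [S \ {min S, j}]`. -/
def qPfAux {F : Type*} [Field F] {A : Type*} [Ring A] [Algebra F A] {N : ℕ}
    (q : F) (b : Fin N → Fin N → A) : ℕ → Finset (Fin N) → A
  | 0, _ => 1
  | k + 1, s =>
    if h : s.Nonempty then
      ∑ j ∈ s.erase (s.min' h),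
        (-q) ^ ((s.filter (· < j)).card - 1) •
          (b (s.min' h) j * qPfAux q b k ((s.erase (s.min' h)).erase j))
    else 0

/-- The quantum Pfaffian `[S]` of an index set `S`, defined by the inductive expansion
along the smallest index (for `S = {1,…,2n}` this is
`[1,…,2n] = Σ_{j=2}^{2n} (-q)^{j-2} [1,j][2,…,ĵ,…,2n]`). -/
def qPf {F : Type*} [Field F] {A : Type*} [Ring A] [Algebra F A] {N : ℕ}
    (q : F) (b : Fin N → Fin N → A) (s : Finset (Fin N)) : A :=
  qPfAux q b (s.card / 2) s


section AuxDevelopment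
open Finset Equiv

/-- peel bijection -/
def psi {M : ℕ} (p : Fin (M+1)) (τ : Equiv.Perm (Fin M)) : Equiv.Perm (Fin (M+1)) :=
  (finSuccEquiv M).trans ((τ.optionCongr).trans (finSuccEquiv' p).symm)

@[simp] lemma psi_zero {M : ℕ} (p : Fin (M+1)) (τ : Equiv.Perm (Fin M)) : psi p τ 0 = p := by
  simp [psi]

@[simp] lemma psi_succ {M : ℕ} (p : Fin (M+1)) (τ : Equiv.Perm (Fin M)) (x : Fin M) :
    psi p τ x.succ = p.succAbove (τ x) := by
  simp [psi, finSuccEquiv'_symm_some]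

lemma psi_bijective {M : ℕ} :
    Function.Bijective (fun pt : Fin (M+1) × Equiv.Perm (Fin M) => psi pt.1 pt.2) := by
  rw [Fintype.bijective_iff_injective_and_card]
  constructor
  · rintro ⟨p, τ⟩ ⟨p', τ'⟩ h
    simp only at h
    have hp : p = p' := by
      have := congrArg (fun σ : Equiv.Perm (Fin (M+1)) => σ 0) h
      simpa using this
    subst hp
    have hτ : τ = τ' := by
      refine Equiv.ext fun x => ?_
      have := congrArg (fun σ : Equiv.Perm (Fin (M+1)) => σ x.succ) h
      simp only [psi_succ] at this
      exact (Fin.succAbove_right_injective (p := p)) this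
    simp [hτ]
  · simp [Fintype.card_perm, Nat.factorial_succ]

lemma card_filter_lt_fin {M t : ℕ} (h : t ≤ M) :
    ((Finset.univ : Finset (Fin M)).filter (fun y : Fin M => (y : ℕ) < t)).card = t := by
  have : ((Finset.univ : Finset (Fin M)).filter (fun y : Fin M => (y : ℕ) < t))
      = ((Finset.range t).attachFin (fun m hm => lt_of_lt_of_le (Finset.mem_range.mp hm) h)
          : Finset (Fin M)) := by
    ext y
    simp [Finset.mem_attachFin]
  rw [this, Finset.card_attachFin, Finset.card_range]

lemma sum_ite_lt_fin {M t : ℕ} (h : t ≤ M) :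
    (∑ y : Fin M, if (y : ℕ) < t then (1:ℕ) else 0) = t := by
  rw [← Finset.card_filter]; exact card_filter_lt_fin h

lemma inv_psi {M : ℕ} (p : Fin (M+1)) (τ : Equiv.Perm (Fin M)) :
    inversionNumber (psi p τ) = p + inversionNumber τ := by
  unfold inversionNumber
  rw [Finset.card_filter, Fintype.sum_prod_type, Fin.sum_univ_succ]
  have h0 : (∑ y : Fin (M+1), if (0 : Fin (M+1)) < y ∧ psi p τ y < psi p τ 0 then (1:ℕ) else 0)
      = (p : ℕ) := by
    rw [Fin.sum_univ_succ]
    have hiff : ∀ x : Fin M,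
        ((0 : Fin (M+1)) < x.succ ∧ psi p τ x.succ < psi p τ 0 ↔ ((τ x : ℕ) < p)) := by
      intro x
      simp only [psi_succ, psi_zero]
      constructor
      · rintro ⟨-, h2⟩
        have := (Fin.succAbove_lt_iff_castSucc_lt p (τ x)).mp h2
        simpa [Fin.lt_def] using this
      · intro hx
        refine ⟨Fin.succ_pos _, (Fin.succAbove_lt_iff_castSucc_lt p (τ x)).mpr ?_⟩
        simpa [Fin.lt_def] using hx
    rw [Finset.sum_congr rfl (fun x _ => by rw [if_congr (hiff x) rfl rfl])]
    rw [Fintype.sum_equiv τ _ (fun x : Fin M => if ((x:ℕ) < p) then (1:ℕ) else 0) (fun x => rfl)]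
    have hle : (p : ℕ) ≤ M := Nat.lt_succ_iff.mp p.isLt
    simpa using sum_ite_lt_fin hle
  rw [h0]
  congr 1
  -- remaining: ∑ x, ∑ y, [succ x < succ y ∧ ...] = inversionNumber τ
  rw [Finset.card_filter, Fintype.sum_prod_type]
  refine Finset.sum_congr rfl fun x _ => ?_
  rw [Fin.sum_univ_succ]
  have : ¬ (x.succ < (0 : Fin (M+1)) ∧ psi p τ 0 < psi p τ x.succ) := by
    rintro ⟨h1, -⟩; exact absurd h1 (Fin.not_lt.mpr (Fin.zero_le _))
  rw [if_neg this, zero_add]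
  refine Finset.sum_congr rfl fun y _ => ?_
  refine if_congr ?_ rfl rfl
  simp only [psi_succ]
  rw [Fin.succ_lt_succ_iff, Fin.succAbove_lt_succAbove_iff]


section MahonianSec
variable {F : Type*} [Field F]

/-- `cF q m = ∏_{i=1}^m [i]_{q^4}` -/
def cF (q : F) : ℕ → F
  | 0 => 1
  | m + 1 => (∑ k ∈ Finset.range (m+1), q ^ (4*k)) * cF q m

lemma mahonian (q : F) : ∀ n : ℕ, (∑ τ : Equiv.Perm (Fin n), q ^ (4 * inversionNumber τ)) = cF q n := by
  intro n
  induction n with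
  | zero =>
      rw [cF]
      rw [Fintype.sum_subsingleton (fun τ : Equiv.Perm (Fin 0) => q ^ (4 * inversionNumber τ)) 1]
      have : inversionNumber (1 : Equiv.Perm (Fin 0)) = 0 := by
        unfold inversionNumber
        simp
      simp [this]
  | succ m ih =>
      have := Fintype.sum_bijective _ (psi_bijective (M := m))
        (fun pt : Fin (m+1) × Equiv.Perm (Fin m) => q ^ (4 * inversionNumber (psi pt.1 pt.2)))
        (fun σ => q ^ (4 * inversionNumber σ)) (fun pt => rfl)
      rw [← this, Fintype.sum_prod_type]
      have step : ∀ p : Fin (m+1),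
          (∑ τ : Equiv.Perm (Fin m), q ^ (4 * inversionNumber (psi p τ)))
            = q ^ (4 * (p:ℕ)) * ∑ τ : Equiv.Perm (Fin m), q ^ (4 * inversionNumber τ) := by
        intro p
        rw [Finset.mul_sum]
        refine Finset.sum_congr rfl fun τ _ => ?_
        rw [inv_psi, Nat.mul_add, pow_add]
      simp only [step, ih]
      rw [cF, ← Fin.sum_univ_eq_sum_range (fun k => q ^ (4*k)) (m+1), Finset.sum_mul]
end MahonianSec

section Aux2
variable {F : Type*} [Field F] {A : Type*} [Ring A] [Algebra F A] {N : ℕ}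

/-- rank of `v` in `S`: number of elements of `S` below `v`. -/
def rk (S : Finset (Fin N)) (v : Fin N) : ℕ := (S.filter (· < v)).card

/-- sum over ordered matchings of `S` (with `m` pairs) of `(-q)^{ℓ} b⋯b`. -/
def MM (q : F) (b : Fin N → Fin N → A) : ℕ → Finset (Fin N) → A
  | 0, S => if S = ∅ then 1 else 0
  | m+1, S => ∑ i ∈ S, ∑ j ∈ S.filter (i < ·),
      (-q) ^ (rk S i + rk S j - 1) • (b i j * MM q b m ((S.erase i).erase j))

/-- sum over ordered matchings of `S` whose pair containing `min S` is at position `k`. -/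
def BB (q : F) (b : Fin N → Fin N → A) : ℕ → ℕ → Finset (Fin N) → A
  | _, 0, _ => 0
  | 0, m+1, S =>
      if h : S.Nonempty then
        ∑ j ∈ S.erase (S.min' h), (-q) ^ (rk S j - 1) •
          (b (S.min' h) j * MM q b m ((S.erase (S.min' h)).erase j))
      else 0
  | k+1, m+1, S =>
      if h : S.Nonempty then
        ∑ i ∈ S.erase (S.min' h), ∑ j ∈ (S.erase (S.min' h)).filter (i < ·),
          (-q) ^ (rk S i + rk S j - 1) • (b i j * BB q b k m ((S.erase i).erase j))
      else 0

lemma rk_erase_of_lt {S : Finset (Fin N)} {a v : Fin N} (ha : a ∈ S) (h : a < v) :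
    rk (S.erase a) v = rk S v - 1 := by
  unfold rk
  rw [Finset.filter_erase]
  refine Finset.card_erase_of_mem ?_
  exact Finset.mem_filter.mpr ⟨ha, h⟩

lemma rk_erase_of_not_lt {S : Finset (Fin N)} {a v : Fin N} (h : ¬ a < v) :
    rk (S.erase a) v = rk S v := by
  unfold rk
  rw [Finset.filter_erase, Finset.erase_eq_of_notMem]
  simp [h]

lemma rk_min' {S : Finset (Fin N)} (h : S.Nonempty) : rk S (S.min' h) = 0 := by
  unfold rk
  rw [Finset.card_eq_zero, Finset.filter_eq_empty_iff]
  intro x hx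
  exact Fin.not_lt.mpr (S.min'_le x hx)

lemma rk_pos_of_mem {S : Finset (Fin N)} {w v : Fin N} (hw : w ∈ S) (h : w < v) :
    1 ≤ rk S v := by
  have : w ∈ S.filter (· < v) := Finset.mem_filter.mpr ⟨hw, h⟩
  exact Finset.card_pos.mpr ⟨w, this⟩ 

lemma min'_erase_ne {S : Finset (Fin N)} (h : S.Nonempty) {T : Finset (Fin N)}
    (hT : T ⊆ S) (hm : S.min' h ∈ T) (hT2 : T.Nonempty) : T.min' hT2 = S.min' h := by
  refine le_antisymm (T.min'_le _ hm) (Finset.le_min' _ _ _ fun y hy => S.min'_le y (hT hy))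

lemma erase_mem_lt {S : Finset (Fin N)} (h : S.Nonempty) {x : Fin N}
    (hx : x ∈ S.erase (S.min' h)) : S.min' h < x :=
  lt_of_le_of_ne (S.min'_le x (Finset.mem_of_mem_erase hx))
    (Ne.symm (Finset.ne_of_mem_erase hx))

lemma erase4_comm (S : Finset (Fin N)) (a b c d : Fin N) :
    (((S.erase a).erase b).erase c).erase d = S \ {a, b, c, d} := by
  ext x
  simp only [Finset.mem_erase, Finset.mem_sdiff, Finset.mem_insert, Finset.mem_singleton]
  tauto

lemma erase2_sdiff (S : Finset (Fin N)) (a b : Fin N) :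
    (S.erase a).erase b = S \ {a, b} := by
  ext x
  simp only [Finset.mem_erase, Finset.mem_sdiff, Finset.mem_insert, Finset.mem_singleton]
  tauto


lemma ite_sum {β : Type*} [AddCommMonoid β] (P : Prop) [Decidable P]
    {α : Type*} (s : Finset α) (h : α → β) :
    (if P then ∑ x ∈ s, h x else 0) = ∑ x ∈ s, if P then h x else 0 := by
  split_ifs with hP
  · rfl
  · exact (Finset.sum_eq_zero fun x _ => rfl).symm

lemma ite_ite {β : Type*} [Zero β] (P Q : Prop) [Decidable P] [Decidable Q] (v : β) :
    (if P then (if Q then v else 0) else 0) = if P ∧ Q then v else 0 := by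
  by_cases hP : P <;> by_cases hQ : Q <;> simp [hP, hQ]

lemma erase_erase_filter {α : Type*} [DecidableEq α] (s : Finset α) (a c : α) :
    (s.erase a).erase c = s.filter (fun x => x ≠ a ∧ x ≠ c) := by
  ext x
  simp only [Finset.mem_erase, Finset.mem_filter]
  tauto

lemma sum_split3 {β : Type*} [AddCommMonoid β] (s : Finset (Fin N)) (f : Fin N → Fin N → Fin N → β) :
    (∑ i ∈ s, ∑ j ∈ s, ∑ k ∈ s, if i < j ∧ k ≠ i ∧ k ≠ j then f i j k else 0)
    = ∑ x ∈ s, ∑ y ∈ s, ∑ z ∈ s, if x < y ∧ y < z then f y z x + f x z y + f x y z else 0 := by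
  have point : ∀ i j k : Fin N, (if i < j ∧ k ≠ i ∧ k ≠ j then f i j k else 0)
      = (if k < i ∧ i < j then f i j k else 0) + (if i < k ∧ k < j then f i j k else 0)
        + (if i < j ∧ j < k then f i j k else 0) := by
    intro i j k
    simp only [Fin.lt_def, Ne, ← Fin.val_eq_val]
    split_ifs <;> first | (exfalso; omega) | simp
  calc (∑ i ∈ s, ∑ j ∈ s, ∑ k ∈ s, if i < j ∧ k ≠ i ∧ k ≠ j then f i j k else 0)
      = (∑ i ∈ s, ∑ j ∈ s, ∑ k ∈ s, ((if k < i ∧ i < j then f i j k else 0)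
          + (if i < k ∧ k < j then f i j k else 0) + (if i < j ∧ j < k then f i j k else 0))) := by
        refine Finset.sum_congr rfl fun i _ => Finset.sum_congr rfl fun j _ =>
          Finset.sum_congr rfl fun k _ => point i j k
    _ = (∑ i ∈ s, ∑ j ∈ s, ∑ k ∈ s, (if k < i ∧ i < j then f i j k else 0))
        + (∑ i ∈ s, ∑ j ∈ s, ∑ k ∈ s, (if i < k ∧ k < j then f i j k else 0))
        + (∑ i ∈ s, ∑ j ∈ s, ∑ k ∈ s, (if i < j ∧ j < k then f i j k else 0)) := by
        simp [Finset.sum_add_distrib]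
    _ = (∑ x ∈ s, ∑ y ∈ s, ∑ z ∈ s, (if x < y ∧ y < z then f y z x else 0))
        + (∑ x ∈ s, ∑ y ∈ s, ∑ z ∈ s, (if x < y ∧ y < z then f x z y else 0))
        + (∑ x ∈ s, ∑ y ∈ s, ∑ z ∈ s, (if x < y ∧ y < z then f x y z else 0)) := by
        congr 2
        · -- move k to the front
          rw [show (∑ i ∈ s, ∑ j ∈ s, ∑ k ∈ s, if k < i ∧ i < j then f i j k else 0)
              = ∑ i ∈ s, ∑ k ∈ s, ∑ j ∈ s, (if k < i ∧ i < j then f i j k else 0) from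
            Finset.sum_congr rfl fun i _ => Finset.sum_comm]
          exact Finset.sum_comm
        · -- move k to the middle
          exact Finset.sum_congr rfl fun i _ => Finset.sum_comm
    _ = ∑ x ∈ s, ∑ y ∈ s, ∑ z ∈ s, if x < y ∧ y < z then f y z x + f x z y + f x y z else 0 := by
        rw [← Finset.sum_add_distrib, ← Finset.sum_add_distrib]
        refine Finset.sum_congr rfl fun x _ => ?_
        rw [← Finset.sum_add_distrib, ← Finset.sum_add_distrib]
        refine Finset.sum_congr rfl fun y _ => ?_
        rw [← Finset.sum_add_distrib, ← Finset.sum_add_distrib]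
        refine Finset.sum_congr rfl fun z _ => ?_
        split_ifs <;> simp

lemma rk_ge_two {S : Finset (Fin N)} {w x y : Fin N} (hw : w ∈ S) (hx : x ∈ S)
    (h1 : w < x) (h2 : x < y) : 2 ≤ rk S y := by
  show 2 ≤ (S.filter (· < y)).card
  have hsub : ({w, x} : Finset (Fin N)) ⊆ S.filter (· < y) := by
    intro t ht
    simp only [Finset.mem_insert, Finset.mem_singleton] at ht
    rcases ht with rfl | rfl
    · exact Finset.mem_filter.mpr ⟨hw, h1.trans h2⟩
    · exact Finset.mem_filter.mpr ⟨hx, h2⟩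
  have : ({w, x} : Finset (Fin N)).card = 2 := by
    rw [Finset.card_insert_of_notMem (by simp [h1.ne]), Finset.card_singleton]
  calc 2 = ({w, x} : Finset (Fin N)).card := this.symm
    _ ≤ _ := Finset.card_le_card hsub

lemma rk_ge_three {S : Finset (Fin N)} {w x y z : Fin N} (hw : w ∈ S) (hx : x ∈ S) (hy : y ∈ S)
    (h1 : w < x) (h2 : x < y) (h3 : y < z) : 3 ≤ rk S z := by
  show 3 ≤ (S.filter (· < z)).card
  have hsub : ({w, x, y} : Finset (Fin N)) ⊆ S.filter (· < z) := by
    intro t ht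
    simp only [Finset.mem_insert, Finset.mem_singleton] at ht
    rcases ht with rfl | rfl | rfl
    · exact Finset.mem_filter.mpr ⟨hw, h1.trans (h2.trans h3)⟩
    · exact Finset.mem_filter.mpr ⟨hx, h2.trans h3⟩
    · exact Finset.mem_filter.mpr ⟨hy, h3⟩
  have hc : ({w, x, y} : Finset (Fin N)).card = 3 := by
    rw [Finset.card_insert_of_notMem, Finset.card_insert_of_notMem, Finset.card_singleton]
    · simp only [Finset.mem_singleton]; exact h2.ne
    · simp only [Finset.mem_insert, Finset.mem_singleton]
      push_neg
      exact ⟨h1.ne, (h1.trans h2).ne⟩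
  calc 3 = ({w, x, y} : Finset (Fin N)).card := hc.symm
    _ ≤ _ := Finset.card_le_card hsub


variable (q : F) (b : Fin N → Fin N → A)

lemma hb_key (hq : q ≠ 0)
    (hb : ∀ i j k l : Fin N, i < j → j < k → k < l →
      b i j * b k l + (-q) • (b i k * b j l) + (-q) ^ 2 • (b i l * b j k)
        = b k l * b i j + (-q) ^ (-1 : ℤ) • (b j l * b i k)
            + (-q) ^ (-2 : ℤ) • (b j k * b i l))
    (w x y z : Fin N) (hwx : w < x) (hxy : x < y) (hyz : y < z) (M : A) (E : ℕ) :
    (-q)^(E+4) • (b y z * (b w x * M)) + (-q)^(E+3) • (b x z * (b w y * M))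
        + (-q)^(E+2) • (b x y * (b w z * M))
      = q^4 • ((-q)^E • (b w x * (b y z * M)) + (-q)^(E+1) • (b w y * (b x z * M))
        + (-q)^(E+2) • (b w z * (b x y * M))) := by
  have hs : (-q) ≠ 0 := neg_ne_zero.mpr hq
  have h4 : (q : F)^4 = (-q)^4 := (Even.neg_pow (by decide) q).symm
  have hz1 : (-q)^(-1 : ℤ) = ((-q))⁻¹ := zpow_neg_one (-q)
  have hz2 : (-q)^(-2 : ℤ) = ((-q)^2)⁻¹ := by
    rw [show (-2 : ℤ) = -((2:ℕ) : ℤ) by norm_num, zpow_neg, zpow_natCast]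
  have hbw := hb w x y z hwx hxy hyz
  have hmul := congrArg (fun t => t * M) hbw
  simp only [add_mul, smul_mul_assoc] at hmul
  simp only [← mul_assoc]
  have c0 : q^4 * (-q)^E = (-q)^(E+4) := by rw [h4, ← pow_add]; ring_nf
  have c1 : q^4 * (-q)^(E+1) = (-q)^(E+4) * (-q) := by
    rw [h4, ← pow_add, ← pow_succ]; ring_nf
  have c2 : q^4 * (-q)^(E+2) = (-q)^(E+4) * (-q)^2 := by
    rw [h4, ← pow_add, ← pow_add]; ring_nf
  rw [smul_add, smul_add, smul_smul, smul_smul, smul_smul, c0, c1, c2, mul_smul, mul_smul,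
    ← smul_add, ← smul_add, hmul]
  rw [smul_add, smul_add, smul_smul, smul_smul]
  have e3 : (-q)^(E+4) * (-q)^(-1:ℤ) = (-q)^(E+3) := by
    rw [hz1, pow_succ (-q) (E+3), mul_assoc, mul_inv_cancel₀ hs, mul_one]
  have e2 : (-q)^(E+4) * (-q)^(-2:ℤ) = (-q)^(E+2) := by
    rw [hz2, show E+4 = (E+2)+2 by omega, pow_add, mul_assoc,
      mul_inv_cancel₀ (pow_ne_zero 2 hs), mul_one]
  rw [e3, e2]




lemma MM_succ (m : ℕ) (S : Finset (Fin N)) :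
    MM q b (m+1) S = ∑ i ∈ S, ∑ j ∈ S.filter (i < ·),
      (-q) ^ (rk S i + rk S j - 1) • (b i j * MM q b m ((S.erase i).erase j)) := rfl

lemma BB_zero_succ (m : ℕ) (S : Finset (Fin N)) (h : S.Nonempty) :
    BB q b 0 (m+1) S = ∑ j ∈ S.erase (S.min' h), (-q) ^ (rk S j - 1) •
      (b (S.min' h) j * MM q b m ((S.erase (S.min' h)).erase j)) := by
  rw [BB, dif_pos h]

lemma BB_succ_succ (k m : ℕ) (S : Finset (Fin N)) (h : S.Nonempty) :
    BB q b (k+1) (m+1) S = ∑ i ∈ S.erase (S.min' h), ∑ j ∈ (S.erase (S.min' h)).filter (i < ·),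
      (-q) ^ (rk S i + rk S j - 1) • (b i j * BB q b k m ((S.erase i).erase j)) := by
  rw [BB, dif_pos h]

lemma three_le_card {S : Finset (Fin N)} {w i j : Fin N} (hw : w ∈ S) (hi : i ∈ S) (hj : j ∈ S)
    (h1 : w < i) (h2 : i < j) : 3 ≤ S.card := by
  have hsub : ({w, i, j} : Finset (Fin N)) ⊆ S := by
    intro x hx
    simp only [Finset.mem_insert, Finset.mem_singleton] at hx
    rcases hx with rfl | rfl | rfl <;> assumption
  have hcard : ({w, i, j} : Finset (Fin N)).card = 3 := by
    rw [Finset.card_insert_of_notMem, Finset.card_insert_of_notMem, Finset.card_singleton]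
    · simp only [Finset.mem_singleton]; exact (h2.ne)
    · simp only [Finset.mem_insert, Finset.mem_singleton]
      push_neg
      exact ⟨h1.ne, (h1.trans h2).ne⟩
  calc 3 = ({w, i, j} : Finset (Fin N)).card := hcard.symm
    _ ≤ S.card := Finset.card_le_card hsub

lemma filter_lt_erase_min {S : Finset (Fin N)} (h : S.Nonempty) {i : Fin N}
    (hi : i ∈ S.erase (S.min' h)) :
    S.filter (i < ·) = (S.erase (S.min' h)).filter (i < ·) := by
  ext x
  simp only [Finset.mem_filter, Finset.mem_erase]
  constructor
  · rintro ⟨hx, hlt⟩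
    refine ⟨⟨?_, hx⟩, hlt⟩
    rintro rfl
    exact absurd ((erase_mem_lt h hi).trans hlt) (Fin.not_lt.mpr (le_refl _))
  · rintro ⟨⟨-, hx⟩, hlt⟩
    exact ⟨hx, hlt⟩

lemma MM_eq_sum_BB : ∀ (m : ℕ) (S : Finset (Fin N)), S.card = 2*(m+1) →
    MM q b (m+1) S = ∑ k ∈ Finset.range (m+1), BB q b k (m+1) S := by
  intro m
  induction m with
  | zero =>
      intro S hS
      have hne : S.Nonempty := by rw [← Finset.card_pos, hS]; omega
      rw [MM_succ, Finset.sum_range_one, BB_zero_succ q b 0 S hne]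
      set w := S.min' hne with hw
      rw [← Finset.add_sum_erase S _ (S.min'_mem hne)]
      have hzero : ∑ i ∈ S.erase w, ∑ j ∈ S.filter (i < ·),
          (-q) ^ (rk S i + rk S j - 1) • (b i j * MM q b 0 ((S.erase i).erase j)) = 0 := by
        refine Finset.sum_eq_zero fun i hi => Finset.sum_eq_zero fun j hj => ?_
        exfalso
        rw [Finset.mem_filter] at hj
        have := three_le_card (S.min'_mem hne) (Finset.mem_of_mem_erase hi) hj.1
          (erase_mem_lt hne hi) hj.2
        omega
      rw [hzero, add_zero]
      have hfw : S.filter (w < ·) = S.erase w := by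
        ext x
        simp only [Finset.mem_filter, Finset.mem_erase]
        constructor
        · rintro ⟨hx, hlt⟩; exact ⟨hlt.ne', hx⟩
        · rintro ⟨hne', hx⟩
          exact ⟨hx, lt_of_le_of_ne (S.min'_le x hx) (Ne.symm hne')⟩
      rw [hfw, rk_min']
      simp
      rfl
  | succ m' ih =>
      intro S hS
      have hne : S.Nonempty := by rw [← Finset.card_pos, hS]; omega
      rw [MM_succ, ← Finset.add_sum_erase S _ (S.min'_mem hne), Finset.sum_range_succ']
      set w := S.min' hne with hw
      have piece1 : ∑ j ∈ S.filter (w < ·),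
          (-q) ^ (rk S w + rk S j - 1) • (b w j * MM q b (m'+1) ((S.erase w).erase j))
          = BB q b 0 (m'+1+1) S := by
        rw [BB_zero_succ q b (m'+1) S hne]
        have hfw : S.filter (w < ·) = S.erase w := by
          ext x
          simp only [Finset.mem_filter, Finset.mem_erase]
          constructor
          · rintro ⟨hx, hlt⟩; exact ⟨hlt.ne', hx⟩
          · rintro ⟨hne', hx⟩
            exact ⟨hx, lt_of_le_of_ne (S.min'_le x hx) (Ne.symm hne')⟩
        rw [hfw, rk_min']
        simp
        rfl
      have piece2 : ∑ i ∈ S.erase w, ∑ j ∈ S.filter (i < ·),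
          (-q) ^ (rk S i + rk S j - 1) • (b i j * MM q b (m'+1) ((S.erase i).erase j))
          = ∑ k ∈ Finset.range (m'+1), BB q b (k+1) (m'+1+1) S := by
        have step1 : ∀ i ∈ S.erase w, ∀ j ∈ S.filter (i < ·),
            MM q b (m'+1) ((S.erase i).erase j)
              = ∑ k ∈ Finset.range (m'+1), BB q b k (m'+1) ((S.erase i).erase j) := by
          intro i hi j hj
          rw [Finset.mem_filter] at hj
          have hji : j ∈ S.erase i :=
            Finset.mem_erase.mpr ⟨(hj.2).ne', hj.1⟩
          have hcard : ((S.erase i).erase j).card = 2*(m'+1) := by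
            rw [Finset.card_erase_of_mem hji, Finset.card_erase_of_mem (Finset.mem_of_mem_erase hi)]
            omega
          exact ih _ hcard
        calc ∑ i ∈ S.erase w, ∑ j ∈ S.filter (i < ·),
            (-q) ^ (rk S i + rk S j - 1) • (b i j * MM q b (m'+1) ((S.erase i).erase j))
            = ∑ i ∈ S.erase w, ∑ j ∈ S.filter (i < ·), ∑ k ∈ Finset.range (m'+1),
              (-q) ^ (rk S i + rk S j - 1) • (b i j * BB q b k (m'+1) ((S.erase i).erase j)) := by
              refine Finset.sum_congr rfl fun i hi => Finset.sum_congr rfl fun j hj => ?_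
              rw [step1 i hi j hj, Finset.mul_sum, Finset.smul_sum]
          _ = ∑ k ∈ Finset.range (m'+1), ∑ i ∈ S.erase w, ∑ j ∈ S.filter (i < ·),
              (-q) ^ (rk S i + rk S j - 1) • (b i j * BB q b k (m'+1) ((S.erase i).erase j)) := by
              rw [Finset.sum_comm]
              refine Finset.sum_congr rfl fun k _ => Finset.sum_comm
          _ = ∑ k ∈ Finset.range (m'+1), BB q b (k+1) (m'+1+1) S := by
              refine Finset.sum_congr rfl fun k _ => ?_
              rw [BB_succ_succ q b k (m'+1) S hne]
              refine Finset.sum_congr rfl fun i hi => ?_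
              rw [← filter_lt_erase_min hne hi]
      rw [piece1, piece2, add_comm]


/-- summand shape appearing in the expansion of `BB 1`. -/
def F1 (q : F) (b : Fin N → Fin N → A) (m : ℕ) (S : Finset (Fin N)) (w i j j' : Fin N) : A :=
  (-q) ^ (rk S i + rk S j - 1) •
    (b i j * ((-q) ^ (rk ((S.erase i).erase j) j' - 1) •
      (b w j' * MM q b m (S \ {i, j, w, j'}))))

/-- summand shape appearing in the expansion of `BB 0`. -/
def F0 (q : F) (b : Fin N → Fin N → A) (m : ℕ) (S : Finset (Fin N)) (w i j j' : Fin N) : A :=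
  (-q) ^ (rk S j' - 1) •
    (b w j' * ((-q) ^ (rk ((S.erase w).erase j') i + rk ((S.erase w).erase j') j - 1) •
      (b i j * MM q b m (S \ {w, j', i, j}))))

lemma BB_one_lhs (m : ℕ) (S : Finset (Fin N)) (hS : S.card = 2*(m+2)) (hne : S.Nonempty) :
    BB q b 1 (m+2) S
      = ∑ x ∈ S.erase (S.min' hne), ∑ y ∈ S.erase (S.min' hne), ∑ z ∈ S.erase (S.min' hne),
          if x < y ∧ y < z then
            F1 q b m S (S.min' hne) y z x + F1 q b m S (S.min' hne) x z y
              + F1 q b m S (S.min' hne) x y z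
          else 0 := by
  set w := S.min' hne with hw
  have hwS : w ∈ S := S.min'_mem hne
  calc BB q b 1 (m+2) S
      = ∑ i ∈ S.erase w, ∑ j ∈ (S.erase w).filter (i < ·),
          (-q) ^ (rk S i + rk S j - 1) • (b i j * BB q b 0 (m+1) ((S.erase i).erase j)) :=
        BB_succ_succ q b 0 (m+1) S hne
    _ = ∑ i ∈ S.erase w, ∑ j ∈ (S.erase w).filter (i < ·),
          ∑ j' ∈ ((S.erase w).erase i).erase j, F1 q b m S w i j j' := by
        refine Finset.sum_congr rfl fun i hi => Finset.sum_congr rfl fun j hj => ?_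
        obtain ⟨hjm, hij⟩ := Finset.mem_filter.mp hj
        have hiS := Finset.mem_of_mem_erase hi
        have hjS := Finset.mem_of_mem_erase hjm
        have hwi : w < i := erase_mem_lt hne hi
        have hwj : w < j := erase_mem_lt hne hjm
        have hjX : j ∈ S.erase i := Finset.mem_erase.mpr ⟨hij.ne', hjS⟩
        have hcX : ((S.erase i).erase j).card = 2*(m+1) := by
          rw [Finset.card_erase_of_mem hjX, Finset.card_erase_of_mem hiS]; omega
        have hXne : ((S.erase i).erase j).Nonempty := by rw [← Finset.card_pos, hcX]; omega
        have hwX : w ∈ (S.erase i).erase j :=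
          Finset.mem_erase.mpr ⟨hwj.ne, Finset.mem_erase.mpr ⟨hwi.ne, hwS⟩⟩
        have hsub : (S.erase i).erase j ⊆ S := fun t ht =>
          Finset.mem_of_mem_erase (Finset.mem_of_mem_erase ht)
        have hminX : ((S.erase i).erase j).min' hXne = w :=
          min'_erase_ne hne hsub hwX hXne
        rw [BB_zero_succ q b m _ hXne, hminX, Finset.mul_sum, Finset.smul_sum]
        have hXw : ((S.erase i).erase j).erase w = ((S.erase w).erase i).erase j := by
          rw [Finset.erase_right_comm (s := S.erase i), Finset.erase_right_comm (s := S)]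
        refine Finset.sum_congr hXw fun j' hj' => ?_
        rw [erase4_comm]
        rfl
    _ = ∑ i ∈ S.erase w, ∑ j ∈ S.erase w, ∑ j' ∈ S.erase w,
          (if i < j ∧ j' ≠ i ∧ j' ≠ j then F1 q b m S w i j j' else 0) := by
        refine Finset.sum_congr rfl fun i _ => ?_
        rw [Finset.sum_filter]
        refine Finset.sum_congr rfl fun j _ => ?_
        rw [erase_erase_filter, Finset.sum_filter, ite_sum]
        exact Finset.sum_congr rfl fun j' _ => ite_ite _ _ _
    _ = ∑ x ∈ S.erase w, ∑ y ∈ S.erase w, ∑ z ∈ S.erase w,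
          (if x < y ∧ y < z then
            F1 q b m S w y z x + F1 q b m S w x z y + F1 q b m S w x y z
          else 0) := sum_split3 (S.erase w) (F1 q b m S w)

lemma BB_one_rhs (m : ℕ) (S : Finset (Fin N)) (hS : S.card = 2*(m+2)) (hne : S.Nonempty) :
    BB q b 0 (m+2) S
      = ∑ x ∈ S.erase (S.min' hne), ∑ y ∈ S.erase (S.min' hne), ∑ z ∈ S.erase (S.min' hne),
          if x < y ∧ y < z then
            F0 q b m S (S.min' hne) y z x + F0 q b m S (S.min' hne) x z y
              + F0 q b m S (S.min' hne) x y z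
          else 0 := by
  set w := S.min' hne with hw
  calc BB q b 0 (m+2) S
      = ∑ j' ∈ S.erase w, (-q) ^ (rk S j' - 1) •
          (b w j' * MM q b (m+1) ((S.erase w).erase j')) := BB_zero_succ q b (m+1) S hne
    _ = ∑ j' ∈ S.erase w, ∑ i ∈ (S.erase w).erase j',
          ∑ j ∈ ((S.erase w).erase j').filter (i < ·), F0 q b m S w i j j' := by
        refine Finset.sum_congr rfl fun j' hj' => ?_
        rw [MM_succ, Finset.mul_sum, Finset.smul_sum]
        refine Finset.sum_congr rfl fun i hi => ?_
        rw [Finset.mul_sum, Finset.smul_sum]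
        refine Finset.sum_congr rfl fun j hj => ?_
        rw [erase4_comm]
        rfl
    _ = ∑ j' ∈ S.erase w, ∑ i ∈ S.erase w, ∑ j ∈ S.erase w,
          (if i ≠ j' ∧ (j ≠ j' ∧ i < j) then F0 q b m S w i j j' else 0) := by
        refine Finset.sum_congr rfl fun j' _ => ?_
        rw [← Finset.filter_ne' (S.erase w) j', Finset.sum_filter]
        refine Finset.sum_congr rfl fun i _ => ?_
        have hfil : ((S.erase w).filter (fun a => a ≠ j')).filter (i < ·)
            = (S.erase w).filter (fun j => j ≠ j' ∧ i < j) := by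
          ext t
          simp only [Finset.mem_filter, Finset.mem_erase]
          tauto
        rw [hfil, Finset.sum_filter, ite_sum]
        exact Finset.sum_congr rfl fun j _ => ite_ite _ _ _
    _ = ∑ i ∈ S.erase w, ∑ j ∈ S.erase w, ∑ j' ∈ S.erase w,
          (if i < j ∧ j' ≠ i ∧ j' ≠ j then F0 q b m S w i j j' else 0) := by
        rw [Finset.sum_comm]
        refine Finset.sum_congr rfl fun i _ => ?_
        rw [Finset.sum_comm]
        refine Finset.sum_congr rfl fun j _ => Finset.sum_congr rfl fun j' _ => ?_
        refine if_congr ?_ rfl rfl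
        constructor
        · rintro ⟨h1, h2, h3⟩
          exact ⟨h3, Ne.symm h1, Ne.symm h2⟩
        · rintro ⟨h1, h2, h3⟩
          exact ⟨Ne.symm h2, Ne.symm h3, h1⟩
    _ = ∑ x ∈ S.erase w, ∑ y ∈ S.erase w, ∑ z ∈ S.erase w,
          (if x < y ∧ y < z then
            F0 q b m S w y z x + F0 q b m S w x z y + F0 q b m S w x y z
          else 0) := sum_split3 (S.erase w) (F0 q b m S w)

variable (hq : q ≠ 0)
variable (hb : ∀ i j k l : Fin N, i < j → j < k → k < l →
      b i j * b k l + (-q) • (b i k * b j l) + (-q) ^ 2 • (b i l * b j k)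
        = b k l * b i j + (-q) ^ (-1 : ℤ) • (b j l * b i k)
            + (-q) ^ (-2 : ℤ) • (b j k * b i l))
include hq hb

lemma BB_one : ∀ (m : ℕ) (S : Finset (Fin N)), S.card = 2*(m+2) →
    BB q b 1 (m+2) S = (q^4) • BB q b 0 (m+2) S := by
  intro m S hS
  have hne : S.Nonempty := by rw [← Finset.card_pos, hS]; omega
  rw [BB_one_lhs q b m S hS hne, BB_one_rhs q b m S hS hne]
  set w := S.min' hne with hw
  have hwS : w ∈ S := S.min'_mem hne
  rw [Finset.smul_sum]
  refine Finset.sum_congr rfl fun x hx => ?_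
  rw [Finset.smul_sum]
  refine Finset.sum_congr rfl fun y hy => ?_
  rw [Finset.smul_sum]
  refine Finset.sum_congr rfl fun z hz => ?_
  split_ifs with hC
  swap
  · simp
  obtain ⟨hxy, hyz⟩ := hC
  have hxS := Finset.mem_of_mem_erase hx
  have hyS := Finset.mem_of_mem_erase hy
  have hzS := Finset.mem_of_mem_erase hz
  have hwx : w < x := erase_mem_lt hne hx
  have hwy : w < y := hwx.trans hxy
  have hwz : w < z := hwy.trans hyz
  have hxz : x < z := hxy.trans hyz
  have ha1 : 1 ≤ rk S x := rk_pos_of_mem hwS hwx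
  have hc2 : 2 ≤ rk S y := rk_ge_two hwS hxS hwx hxy
  have hd3 : 3 ≤ rk S z := rk_ge_three hwS hxS hyS hwx hxy hyz
  -- set rewrites
  have hM1 : S \ {y, z, w, x} = S \ {w, x, y, z} := by
    ext t; simp only [Finset.mem_sdiff, Finset.mem_insert, Finset.mem_singleton]; tauto
  have hM2 : S \ {x, z, w, y} = S \ {w, x, y, z} := by
    ext t; simp only [Finset.mem_sdiff, Finset.mem_insert, Finset.mem_singleton]; tauto
  have hM3 : S \ {x, y, w, z} = S \ {w, x, y, z} := by
    ext t; simp only [Finset.mem_sdiff, Finset.mem_insert, Finset.mem_singleton]; tauto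
  have hM4 : S \ {w, y, x, z} = S \ {w, x, y, z} := by
    ext t; simp only [Finset.mem_sdiff, Finset.mem_insert, Finset.mem_singleton]; tauto
  have hM5 : S \ {w, z, x, y} = S \ {w, x, y, z} := by
    ext t; simp only [Finset.mem_sdiff, Finset.mem_insert, Finset.mem_singleton]; tauto
  -- rank computations
  have hr1 : rk ((S.erase y).erase z) x = rk S x := by
    rw [rk_erase_of_not_lt (lt_asymm hxz), rk_erase_of_not_lt (lt_asymm hxy)]
  have hr2 : rk ((S.erase x).erase z) y = rk S y - 1 := by
    rw [rk_erase_of_not_lt (lt_asymm hyz), rk_erase_of_lt hxS hxy]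
  have hr3 : rk ((S.erase x).erase y) z = rk S z - 1 - 1 := by
    rw [rk_erase_of_lt (Finset.mem_erase.mpr ⟨hxy.ne', hyS⟩) hyz, rk_erase_of_lt hxS hxz]
  have hr4 : rk ((S.erase w).erase x) y = rk S y - 1 - 1 := by
    rw [rk_erase_of_lt (Finset.mem_erase.mpr ⟨hwx.ne', hxS⟩) hxy, rk_erase_of_lt hwS hwy]
  have hr5 : rk ((S.erase w).erase x) z = rk S z - 1 - 1 := by
    rw [rk_erase_of_lt (Finset.mem_erase.mpr ⟨hwx.ne', hxS⟩) hxz, rk_erase_of_lt hwS hwz]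
  have hr6 : rk ((S.erase w).erase y) x = rk S x - 1 := by
    rw [rk_erase_of_not_lt (lt_asymm hxy), rk_erase_of_lt hwS hwx]
  have hr7 : rk ((S.erase w).erase y) z = rk S z - 1 - 1 := by
    rw [rk_erase_of_lt (Finset.mem_erase.mpr ⟨hwy.ne', hyS⟩) hyz, rk_erase_of_lt hwS hwz]
  have hr8 : rk ((S.erase w).erase z) x = rk S x - 1 := by
    rw [rk_erase_of_not_lt (lt_asymm hxz), rk_erase_of_lt hwS hwx]
  have hr9 : rk ((S.erase w).erase z) y = rk S y - 1 := by
    rw [rk_erase_of_not_lt (lt_asymm hyz), rk_erase_of_lt hwS hwy]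
  simp only [F1, F0, hM1, hM2, hM3, hM4, hM5, hr1, hr2, hr3, hr4, hr5, hr6, hr7, hr8, hr9]
  simp only [mul_smul_comm, smul_smul, ← pow_add]
  have hE1 : rk S y + rk S z - 1 + (rk S x - 1) = (rk S x + rk S y + rk S z - 6) + 4 := by omega
  have hE2 : rk S x + rk S z - 1 + (rk S y - 1 - 1) = (rk S x + rk S y + rk S z - 6) + 3 := by
    omega
  have hE3 : rk S x + rk S y - 1 + (rk S z - 1 - 1 - 1) = (rk S x + rk S y + rk S z - 6) + 2 := by
    omega
  have hE4 : rk S x - 1 + (rk S y - 1 - 1 + (rk S z - 1 - 1) - 1)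
      = rk S x + rk S y + rk S z - 6 := by omega
  have hE5 : rk S y - 1 + (rk S x - 1 + (rk S z - 1 - 1) - 1)
      = (rk S x + rk S y + rk S z - 6) + 1 := by omega
  have hE6 : rk S z - 1 + (rk S x - 1 + (rk S y - 1) - 1)
      = (rk S x + rk S y + rk S z - 6) + 2 := by omega
  rw [hE1, hE2, hE3, hE4, hE5, hE6]
  exact hb_key q b hq hb w x y z hwx hxy hyz (MM q b m (S \ {w, x, y, z}))
    (rk S x + rk S y + rk S z - 6)

lemma BB_step : ∀ (k m : ℕ) (S : Finset (Fin N)), S.card = 2*m → k+2 ≤ m →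
    BB q b (k+1) m S = (q^4) • BB q b k m S := by
  intro k
  induction k with
  | zero =>
      intro m S hS hm
      obtain ⟨m', rfl⟩ : ∃ m', m = m' + 2 := ⟨m - 2, by omega⟩
      exact BB_one q b hq hb m' S hS
  | succ k ih =>
      intro m S hS hm
      obtain ⟨m', rfl⟩ : ∃ m', m = m' + 1 := ⟨m - 1, by omega⟩
      have hne : S.Nonempty := by rw [← Finset.card_pos, hS]; omega
      rw [BB_succ_succ q b (k+1) m' S hne, BB_succ_succ q b k m' S hne, Finset.smul_sum]
      refine Finset.sum_congr rfl fun i hi => ?_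
      rw [Finset.smul_sum]
      refine Finset.sum_congr rfl fun j hj => ?_
      rw [Finset.mem_filter] at hj
      have hji : j ∈ S.erase i :=
        Finset.mem_erase.mpr ⟨(hj.2).ne', Finset.mem_of_mem_erase hj.1⟩
      have hcard : ((S.erase i).erase j).card = 2*m' := by
        rw [Finset.card_erase_of_mem hji, Finset.card_erase_of_mem (Finset.mem_of_mem_erase hi)]
        omega
      rw [ih m' _ hcard (by omega)]
      rw [mul_smul_comm, smul_comm]

lemma BB_pow : ∀ (k m : ℕ) (S : Finset (Fin N)), S.card = 2*m → k+1 ≤ m →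
    BB q b k m S = (q^(4*k)) • BB q b 0 m S := by
  intro k
  induction k with
  | zero => intro m S _ _; simp
  | succ k ih =>
      intro m S hS hm
      rw [BB_step q b hq hb k m S hS hm, ih m S hS (by omega), smul_smul, ← pow_add]
      congr 2
      ring

lemma MM_eq_smul_BB0 (m : ℕ) (S : Finset (Fin N)) (hS : S.card = 2*(m+1)) :
    MM q b (m+1) S = (∑ k ∈ Finset.range (m+1), q^(4*k)) • BB q b 0 (m+1) S := by
  rw [MM_eq_sum_BB q b m S hS, Finset.sum_smul]
  refine Finset.sum_congr rfl fun k hk => ?_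
  rw [Finset.mem_range] at hk
  exact BB_pow q b hq hb k (m+1) S hS (by omega)

lemma MM_eq_cF_qPfAux : ∀ (m : ℕ) (S : Finset (Fin N)), S.card = 2*m →
    MM q b m S = cF q m • qPfAux q b m S := by
  intro m
  induction m with
  | zero =>
      intro S hS
      have : S = ∅ := Finset.card_eq_zero.mp (by omega)
      subst this
      show (if (∅:Finset (Fin N)) = ∅ then (1:A) else 0) = cF q 0 • qPfAux q b 0 ∅
      rw [if_pos rfl]
      show (1:A) = cF q 0 • (1:A)
      rw [cF]
      simp
  | succ m ih =>
      intro S hS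
      have hne : S.Nonempty := by rw [← Finset.card_pos, hS]; omega
      rw [MM_eq_smul_BB0 q b hq hb m S hS, BB_zero_succ q b m S hne]
      rw [qPfAux, dif_pos hne]
      have : ∀ j ∈ S.erase (S.min' hne),
          (-q) ^ (rk S j - 1) • (b (S.min' hne) j * MM q b m ((S.erase (S.min' hne)).erase j))
          = cF q m • ((-q) ^ ((S.filter (· < j)).card - 1) •
              (b (S.min' hne) j * qPfAux q b m ((S.erase (S.min' hne)).erase j))) := by
        intro j hj
        have hcard : ((S.erase (S.min' hne)).erase j).card = 2*m := by
          rw [Finset.card_erase_of_mem hj, Finset.card_erase_of_mem (S.min'_mem hne)]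
          omega
        rw [ih _ hcard]
        have hrk : (S.filter (· < j)).card = rk S j := rfl
        rw [hrk, mul_smul_comm, smul_comm ((-q) ^ (rk S j - 1)) (cF q m)]
      rw [Finset.sum_congr rfl this, ← Finset.smul_sum, smul_smul, cF]



end Aux2
end AuxDevelopment

section Aux3
open Finset Equiv

variable {F : Type*} [Field F] {A : Type*} [Ring A] [Algebra F A] {N : ℕ}
variable (q : F) (b : Fin N → Fin N → A)

lemma sum_perm_peel {M : ℕ} {β : Type*} [AddCommMonoid β] (G : Equiv.Perm (Fin (M+1)) → β) :
    (∑ σ : Equiv.Perm (Fin (M+1)), G σ)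
      = ∑ p : Fin (M+1), ∑ τ : Equiv.Perm (Fin M), G (psi p τ) := by
  have h1 : (∑ pt : Fin (M+1) × Equiv.Perm (Fin M), G (psi pt.1 pt.2)) = ∑ σ, G σ :=
    Fintype.sum_bijective _ psi_bijective _ _ (fun pt => rfl)
  rw [← h1]
  exact Fintype.sum_prod_type _

lemma rk_image {M : ℕ} (e : Fin M → Fin N) (he : StrictMono e) (v : Fin M) :
    rk (Finset.image e Finset.univ) (e v) = (v : ℕ) := by
  unfold rk
  have hset : (Finset.image e Finset.univ).filter (· < e v)
      = Finset.image e (Finset.univ.filter (· < v)) := by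
    ext t
    simp only [Finset.mem_filter, Finset.mem_image, Finset.mem_univ, true_and]
    constructor
    · rintro ⟨⟨x, rfl⟩, hlt⟩
      exact ⟨x, he.lt_iff_lt.mp hlt, rfl⟩
    · rintro ⟨x, hx, rfl⟩
      exact ⟨⟨x, rfl⟩, he hx⟩
  rw [hset, Finset.card_image_of_injective _ he.injective]
  rw [Finset.filter_congr (fun y _ => by simp only [Fin.lt_def] : ∀ y ∈ Finset.univ,
    (y < v) ↔ ((y:ℕ) < (v:ℕ)))]
  exact card_filter_lt_fin (le_of_lt v.isLt)

lemma succAbove_filter_eq {M : ℕ} (p₁ : Fin (M+1)) :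
    Finset.univ.filter (fun t => p₁ < t)
      = Finset.image p₁.succAbove (Finset.univ.filter (fun p₂ => p₁ ≤ p₂.castSucc)) := by
  ext t
  simp only [Finset.mem_filter, Finset.mem_univ, true_and, Finset.mem_image]
  constructor
  · intro hlt
    obtain ⟨z, hz⟩ := Fin.exists_succAbove_eq hlt.ne'
    refine ⟨z, ?_, hz⟩
    rw [← hz] at hlt
    exact (Fin.lt_succAbove_iff_le_castSucc p₁ z).mp hlt
  · rintro ⟨z, hz, rfl⟩
    exact (Fin.lt_succAbove_iff_le_castSucc p₁ z).mpr hz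

lemma image_comp_eq_erase {M : ℕ} (e : Fin (M+2) → Fin N) (he : StrictMono e)
    (p₁ : Fin (M+2)) (p₂ : Fin (M+1)) :
    Finset.image (fun t : Fin M => e (p₁.succAbove (p₂.succAbove t))) Finset.univ
      = ((Finset.image e Finset.univ).erase (e p₁)).erase (e (p₁.succAbove p₂)) := by
  have hinj : Function.Injective (fun t : Fin M => e (p₁.succAbove (p₂.succAbove t))) :=
    he.injective.comp ((Fin.succAbove_right_injective (p := p₁)).comp
      (Fin.succAbove_right_injective (p := p₂)))
  refine Finset.eq_of_subset_of_card_le ?_ ?_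
  · intro t ht
    obtain ⟨x, -, rfl⟩ := Finset.mem_image.mp ht
    refine Finset.mem_erase.mpr ⟨?_, Finset.mem_erase.mpr ⟨?_, ?_⟩⟩
    · exact fun hc => Fin.succAbove_ne p₂ x (Fin.succAbove_right_injective (he.injective hc))
    · exact fun hc => Fin.succAbove_ne p₁ (p₂.succAbove x) (he.injective hc)
    · exact Finset.mem_image.mpr ⟨_, Finset.mem_univ _, rfl⟩
  · have h1 : (Finset.image e Finset.univ).card = M + 2 := by
      rw [Finset.card_image_of_injective _ he.injective, Finset.card_univ, Fintype.card_fin]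
    have h2 : e p₁ ∈ Finset.image e Finset.univ :=
      Finset.mem_image.mpr ⟨_, Finset.mem_univ _, rfl⟩
    have h3 : e (p₁.succAbove p₂) ∈ (Finset.image e Finset.univ).erase (e p₁) := by
      refine Finset.mem_erase.mpr ⟨?_, Finset.mem_image.mpr ⟨_, Finset.mem_univ _, rfl⟩⟩
      exact fun hc => Fin.succAbove_ne p₁ p₂ (he.injective hc)
    rw [Finset.card_erase_of_mem h3, Finset.card_erase_of_mem h2, h1,
      Finset.card_image_of_injective _ hinj, Finset.card_univ, Fintype.card_fin]
    omega

lemma perm_sum_eq_MM : ∀ (m : ℕ) (e : Fin (2*m) → Fin N), StrictMono e →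
    (∑ σ : Equiv.Perm (Fin (2*m)),
      if (∀ k : Fin m, σ ⟨2*(k:ℕ), by have := k.2; refine lt_of_lt_of_le ?_ le_rfl; omega⟩
            < σ ⟨2*(k:ℕ)+1, by have := k.2; refine lt_of_lt_of_le ?_ le_rfl; omega⟩) then
        (-q) ^ inversionNumber σ •
          ((List.finRange m).map (fun k : Fin m =>
            b (e (σ ⟨2*(k:ℕ), by have := k.2; refine lt_of_lt_of_le ?_ le_rfl; omega⟩))
              (e (σ ⟨2*(k:ℕ)+1, by have := k.2; refine lt_of_lt_of_le ?_ le_rfl; omega⟩)))).prod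
      else 0)
    = MM q b m (Finset.image e Finset.univ) := by
  intro m
  induction m with
  | zero =>
      intro e he
      haveI hsub : Subsingleton (Equiv.Perm (Fin (2*0))) :=
        ⟨fun a c => Equiv.ext fun x => x.elim0⟩
      rw [Fintype.sum_subsingleton _ 1]
      rw [if_pos (fun k : Fin 0 => k.elim0)]
      have h0 : inversionNumber (1 : Equiv.Perm (Fin (2*0))) = 0 := by
        unfold inversionNumber
        rw [Finset.card_eq_zero, Finset.filter_eq_empty_iff]
        intro x _
        exact x.1.elim0
      have huniv : (Finset.univ : Finset (Fin (2*0))) = ∅ :=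
        Finset.eq_empty_of_forall_notMem (fun x => absurd x.isLt (by omega))
      rw [h0, pow_zero, huniv, Finset.image_empty]
      rw [show List.finRange 0 = ([] : List (Fin 0)) from rfl, List.map_nil, List.prod_nil,
        one_smul]
      rw [show MM q b 0 (∅ : Finset (Fin N)) = if (∅ : Finset (Fin N)) = ∅ then 1 else 0 from rfl,
        if_pos rfl]
  | succ m ih =>
      intro e0 he0
      suffices key : ∀ (e : Fin (2*m+2) → Fin N), StrictMono e →
        (∑ σ : Equiv.Perm (Fin (2*m+2)),
          if (∀ k : Fin (m+1), σ ⟨2*(k:ℕ), by have := k.2; refine lt_of_lt_of_le ?_ le_rfl; omega⟩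
                < σ ⟨2*(k:ℕ)+1, by have := k.2; refine lt_of_lt_of_le ?_ le_rfl; omega⟩) then
            (-q) ^ inversionNumber σ •
              ((List.finRange (m+1)).map (fun k : Fin (m+1) =>
                b (e (σ ⟨2*(k:ℕ), by have := k.2; refine lt_of_lt_of_le ?_ le_rfl; omega⟩))
                  (e (σ ⟨2*(k:ℕ)+1, by have := k.2; refine lt_of_lt_of_le ?_ le_rfl; omega⟩)))).prod
          else 0)
        = MM q b (m+1) (Finset.image e Finset.univ) by exact key e0 he0
      intro e he
      have he' : ∀ (p₁ : Fin (2*m+2)) (p₂ : Fin (2*m+1)),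
          StrictMono (fun t : Fin (2*m) => e (p₁.succAbove (p₂.succAbove t))) := fun p₁ p₂ =>
        he.comp ((Fin.strictMono_succAbove p₁).comp (Fin.strictMono_succAbove p₂))
      calc (∑ σ : Equiv.Perm (Fin (2*m+2)),
          if (∀ k : Fin (m+1), σ ⟨2*(k:ℕ), by have := k.2; refine lt_of_lt_of_le ?_ le_rfl; omega⟩
                < σ ⟨2*(k:ℕ)+1, by have := k.2; refine lt_of_lt_of_le ?_ le_rfl; omega⟩) then
            (-q) ^ inversionNumber σ •
              ((List.finRange (m+1)).map (fun k : Fin (m+1) =>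
                b (e (σ ⟨2*(k:ℕ), by have := k.2; refine lt_of_lt_of_le ?_ le_rfl; omega⟩))
                  (e (σ ⟨2*(k:ℕ)+1, by have := k.2; refine lt_of_lt_of_le ?_ le_rfl; omega⟩)))).prod
          else 0)
          = ∑ p₁ : Fin (2*m+2), ∑ ρ : Equiv.Perm (Fin (2*m+1)),
              (if (∀ k : Fin (m+1), psi p₁ ρ ⟨2*(k:ℕ), by have := k.2; refine lt_of_lt_of_le ?_ le_rfl; omega⟩
                    < psi p₁ ρ ⟨2*(k:ℕ)+1, by have := k.2; refine lt_of_lt_of_le ?_ le_rfl; omega⟩) then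
                (-q) ^ inversionNumber (psi p₁ ρ) •
                  ((List.finRange (m+1)).map (fun k : Fin (m+1) =>
                    b (e (psi p₁ ρ ⟨2*(k:ℕ), by have := k.2; refine lt_of_lt_of_le ?_ le_rfl; omega⟩))
                      (e (psi p₁ ρ ⟨2*(k:ℕ)+1, by have := k.2; refine lt_of_lt_of_le ?_ le_rfl; omega⟩)))).prod
              else 0) := sum_perm_peel (M := 2*m+1) _
        _ = ∑ p₁ : Fin (2*m+2), ∑ p₂ : Fin (2*m+1), ∑ τ : Equiv.Perm (Fin (2*m)),
              (if (∀ k : Fin (m+1), psi p₁ (psi p₂ τ) ⟨2*(k:ℕ), by have := k.2; refine lt_of_lt_of_le ?_ le_rfl; omega⟩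
                    < psi p₁ (psi p₂ τ) ⟨2*(k:ℕ)+1, by have := k.2; refine lt_of_lt_of_le ?_ le_rfl; omega⟩) then
                (-q) ^ inversionNumber (psi p₁ (psi p₂ τ)) •
                  ((List.finRange (m+1)).map (fun k : Fin (m+1) =>
                    b (e (psi p₁ (psi p₂ τ) ⟨2*(k:ℕ), by have := k.2; refine lt_of_lt_of_le ?_ le_rfl; omega⟩))
                      (e (psi p₁ (psi p₂ τ) ⟨2*(k:ℕ)+1, by have := k.2; refine lt_of_lt_of_le ?_ le_rfl; omega⟩)))).prod
              else 0) :=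
            Finset.sum_congr rfl fun p₁ _ => sum_perm_peel (M := 2*m) _
        _ = ∑ p₁ : Fin (2*m+2), ∑ p₂ : Fin (2*m+1),
              (if p₁ ≤ p₂.castSucc then
                (-q) ^ ((p₁:ℕ)+(p₂:ℕ)) •
                  (b (e p₁) (e (p₁.succAbove p₂)) *
                    MM q b m (Finset.image
                      (fun t : Fin (2*m) => e (p₁.succAbove (p₂.succAbove t))) Finset.univ))
              else 0) := by
            refine Finset.sum_congr rfl fun p₁ _ => Finset.sum_congr rfl fun p₂ _ => ?_
            rw [← ih (fun t : Fin (2*m) => e (p₁.succAbove (p₂.succAbove t))) (he' p₁ p₂)]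
            rw [Finset.mul_sum, Finset.smul_sum, ite_sum]
            refine Finset.sum_congr rfl fun τ _ => ?_
            rw [mul_ite, mul_zero, smul_ite, smul_zero, ite_ite]
            have hv0 : ∀ h : 0 < 2*m+2, psi p₁ (psi p₂ τ) ⟨0, h⟩ = p₁ := fun h => by
              rw [show (⟨0, h⟩ : Fin (2*m+2)) = 0 from rfl, psi_zero]
            have hv1 : ∀ h : 1 < 2*m+2, psi p₁ (psi p₂ τ) ⟨1, h⟩ = p₁.succAbove p₂ := fun h => by
              rw [show (⟨1, h⟩ : Fin (2*m+2)) = (0 : Fin (2*m+1)).succ from rfl, psi_succ,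
                psi_zero]
            have hv2 : ∀ (t : ℕ) (h2 : 2*t+2 < 2*m+2) (h0 : 2*t < 2*m),
                psi p₁ (psi p₂ τ) ⟨2*t+2, h2⟩
                  = p₁.succAbove (p₂.succAbove (τ ⟨2*t, h0⟩)) := by
              intro t h2 h0
              have s1 : psi p₁ (psi p₂ τ) ⟨2*t+2, h2⟩
                  = p₁.succAbove (psi p₂ τ ⟨2*t+1, by omega⟩) :=
                psi_succ p₁ (psi p₂ τ) ⟨2*t+1, by omega⟩
              have s2 : psi p₂ τ ⟨2*t+1, by omega⟩ = p₂.succAbove (τ ⟨2*t, h0⟩) :=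
                psi_succ p₂ τ ⟨2*t, h0⟩
              rw [s1, s2]
            have hv3 : ∀ (t : ℕ) (h2 : 2*t+3 < 2*m+2) (h0 : 2*t+1 < 2*m),
                psi p₁ (psi p₂ τ) ⟨2*t+3, h2⟩
                  = p₁.succAbove (p₂.succAbove (τ ⟨2*t+1, h0⟩)) := by
              intro t h2 h0
              have s1 : psi p₁ (psi p₂ τ) ⟨2*t+3, h2⟩
                  = p₁.succAbove (psi p₂ τ ⟨2*t+2, by omega⟩) :=
                psi_succ p₁ (psi p₂ τ) ⟨2*t+2, by omega⟩
              have s2 : psi p₂ τ ⟨2*t+2, by omega⟩ = p₂.succAbove (τ ⟨2*t+1, h0⟩) :=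
                psi_succ p₂ τ ⟨2*t+1, h0⟩
              rw [s1, s2]
            have hcond : (∀ k : Fin (m+1),
                  psi p₁ (psi p₂ τ) ⟨2*(k:ℕ), by have := k.2; refine lt_of_lt_of_le ?_ le_rfl; omega⟩
                    < psi p₁ (psi p₂ τ) ⟨2*(k:ℕ)+1, by have := k.2; refine lt_of_lt_of_le ?_ le_rfl; omega⟩)
                ↔ (p₁ ≤ p₂.castSucc ∧ ∀ k : Fin m,
                    τ ⟨2*(k:ℕ), by have := k.2; refine lt_of_lt_of_le ?_ le_rfl; omega⟩
                      < τ ⟨2*(k:ℕ)+1, by have := k.2; refine lt_of_lt_of_le ?_ le_rfl; omega⟩) := by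
              constructor
              · intro hQ
                constructor
                · have h0 : psi p₁ (psi p₂ τ) ⟨0, by omega⟩
                      < psi p₁ (psi p₂ τ) ⟨1, by omega⟩ := hQ ⟨0, by omega⟩
                  rw [hv0, hv1] at h0
                  exact (Fin.lt_succAbove_iff_le_castSucc p₁ p₂).mp h0
                · intro k
                  have hk : psi p₁ (psi p₂ τ) ⟨2*(k:ℕ)+2, by have := k.2; refine lt_of_lt_of_le ?_ le_rfl; omega⟩
                      < psi p₁ (psi p₂ τ) ⟨2*(k:ℕ)+3, by have := k.2; refine lt_of_lt_of_le ?_ le_rfl; omega⟩ :=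
                    hQ ⟨(k:ℕ)+1, by have := k.2; refine lt_of_lt_of_le ?_ le_rfl; omega⟩
                  rw [hv2 (k:ℕ) (by have := k.2; refine lt_of_lt_of_le ?_ le_rfl; omega) (by have := k.2; refine lt_of_lt_of_le ?_ le_rfl; omega),
                    hv3 (k:ℕ) (by have := k.2; refine lt_of_lt_of_le ?_ le_rfl; omega) (by have := k.2; refine lt_of_lt_of_le ?_ le_rfl; omega)] at hk
                  exact Fin.succAbove_lt_succAbove_iff.mp
                    (Fin.succAbove_lt_succAbove_iff.mp hk)
              · rintro ⟨h0, hR⟩ k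
                obtain ⟨kv, hkv⟩ := k
                cases kv with
                | zero =>
                    show psi p₁ (psi p₂ τ) ⟨0, by omega⟩ < psi p₁ (psi p₂ τ) ⟨1, by omega⟩
                    rw [hv0, hv1]
                    exact (Fin.lt_succAbove_iff_le_castSucc p₁ p₂).mpr h0
                | succ t =>
                    show psi p₁ (psi p₂ τ) ⟨2*t+2, by omega⟩
                      < psi p₁ (psi p₂ τ) ⟨2*t+3, by omega⟩
                    rw [hv2 t (by omega) (by omega), hv3 t (by omega) (by omega)]
                    exact Fin.succAbove_lt_succAbove_iff.mpr
                      (Fin.succAbove_lt_succAbove_iff.mpr (hR ⟨t, by omega⟩))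
            refine if_congr hcond ?_ rfl
            rw [inv_psi, inv_psi]
            have hprod : ((List.finRange (m+1)).map (fun k : Fin (m+1) =>
                b (e (psi p₁ (psi p₂ τ) ⟨2*(k:ℕ), by have := k.2; refine lt_of_lt_of_le ?_ le_rfl; omega⟩))
                  (e (psi p₁ (psi p₂ τ) ⟨2*(k:ℕ)+1, by have := k.2; refine lt_of_lt_of_le ?_ le_rfl; omega⟩)))).prod
                = b (e p₁) (e (p₁.succAbove p₂)) *
                    ((List.finRange m).map (fun k : Fin m =>
                      b ((fun t : Fin (2*m) => e (p₁.succAbove (p₂.succAbove t)))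
                          (τ ⟨2*(k:ℕ), by have := k.2; refine lt_of_lt_of_le ?_ le_rfl; omega⟩))
                        ((fun t : Fin (2*m) => e (p₁.succAbove (p₂.succAbove t)))
                          (τ ⟨2*(k:ℕ)+1, by have := k.2; refine lt_of_lt_of_le ?_ le_rfl; omega⟩)))).prod := by
              rw [List.finRange_succ, List.map_cons, List.prod_cons, List.map_map]
              refine congrArg₂ (· * ·) ?_
                (congrArg List.prod (List.map_congr_left fun k _ => ?_))
              · show b (e (psi p₁ (psi p₂ τ) ⟨0, by omega⟩))
                  (e (psi p₁ (psi p₂ τ) ⟨1, by omega⟩)) = _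
                rw [hv0, hv1]
              · show b (e (psi p₁ (psi p₂ τ) ⟨2*(k:ℕ)+2, by have := k.2; refine lt_of_lt_of_le ?_ le_rfl; omega⟩))
                  (e (psi p₁ (psi p₂ τ) ⟨2*(k:ℕ)+3, by have := k.2; refine lt_of_lt_of_le ?_ le_rfl; omega⟩)) = _
                rw [hv2 (k:ℕ) (by have := k.2; refine lt_of_lt_of_le ?_ le_rfl; omega) (by have := k.2; refine lt_of_lt_of_le ?_ le_rfl; omega),
                  hv3 (k:ℕ) (by have := k.2; refine lt_of_lt_of_le ?_ le_rfl; omega) (by have := k.2; refine lt_of_lt_of_le ?_ le_rfl; omega)]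
            rw [hprod, mul_smul_comm, smul_smul, ← pow_add, ← add_assoc]
        _ = MM q b (m+1) (Finset.image e Finset.univ) := by
            rw [MM_succ, Finset.sum_image (fun x _ y _ h => he.injective h)]
            refine Finset.sum_congr rfl fun p₁ _ => ?_
            have hset1 : (Finset.image e Finset.univ).filter (fun j => e p₁ < j)
                = Finset.image e (Finset.univ.filter (fun y => p₁ < y)) := by
              ext t
              simp only [Finset.mem_filter, Finset.mem_image, Finset.mem_univ, true_and]
              constructor
              · rintro ⟨⟨x, rfl⟩, hlt⟩
                exact ⟨x, he.lt_iff_lt.mp hlt, rfl⟩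
              · rintro ⟨x, hx, rfl⟩
                exact ⟨⟨x, rfl⟩, he hx⟩
            rw [hset1, Finset.sum_image (fun x _ y _ h => he.injective h),
              succAbove_filter_eq p₁,
              Finset.sum_image (fun x _ y _ h => Fin.succAbove_right_injective h),
              Finset.sum_filter]
            refine Finset.sum_congr rfl fun p₂ _ => ?_
            split_ifs with hc
            · rw [rk_image e he p₁, rk_image e he (p₁.succAbove p₂),
                image_comp_eq_erase e he p₁ p₂]
              have hvs : ((p₁.succAbove p₂ : Fin (2*m+2)) : ℕ) = (p₂:ℕ) + 1 := by
                rw [Fin.succAbove_of_le_castSucc p₁ p₂ hc]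
                exact Fin.val_succ p₂
              rw [hvs]
              congr 2
            · rfl
end Aux3


/-- sum over all ordered matchings `Π'` (pairs `(i_k,j_k)` with `i_k < j_k`
but no ordering among the `i_k`):
`Σ_{π ∈ Π'} (-q)^{ℓ(π)} b_{i_1 j_1} ⋯ b_{i_n j_n} = (Σ_{σ ∈ S_n} q^{4ℓ(σ)}) [1,…,2n]`. -/
theorem quantum_pfaffian_ordered_matchings_sum
    (F : Type*) [Field F] (q : F) (hq : q ≠ 0) (n : ℕ)
    (A : Type*) [Ring A] [Algebra F A]
    (b : Fin (2 * n) → Fin (2 * n) → A)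
    (hb : ∀ i j k l : Fin (2 * n), i < j → j < k → k < l →
      b i j * b k l + (-q) • (b i k * b j l) + (-q) ^ 2 • (b i l * b j k)
        = b k l * b i j + (-q) ^ (-1 : ℤ) • (b j l * b i k)
            + (-q) ^ (-2 : ℤ) • (b j k * b i l)) :
    ∑ σ ∈ (Finset.univ : Finset (Equiv.Perm (Fin (2 * n)))).filter
        (fun σ => ∀ k : Fin n,
          σ ⟨2 * (k : ℕ), by have := k.isLt; omega⟩
            < σ ⟨2 * (k : ℕ) + 1, by have := k.isLt; omega⟩),
      (-q) ^ inversionNumber σ •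
        ((List.finRange n).map (fun k : Fin n =>
          b (σ ⟨2 * (k : ℕ), by have := k.isLt; omega⟩)
            (σ ⟨2 * (k : ℕ) + 1, by have := k.isLt; omega⟩))).prod
      = (∑ τ : Equiv.Perm (Fin n), q ^ (4 * inversionNumber τ)) • qPf q b Finset.univ := by
  have hL : (∑ σ : Equiv.Perm (Fin (2*n)),
      if (∀ k : Fin n, σ ⟨2*(k:ℕ), by have := k.isLt; omega⟩
            < σ ⟨2*(k:ℕ)+1, by have := k.isLt; omega⟩) then
        (-q) ^ inversionNumber σ •
          ((List.finRange n).map (fun k : Fin n =>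
            b (σ ⟨2*(k:ℕ), by have := k.isLt; omega⟩)
              (σ ⟨2*(k:ℕ)+1, by have := k.isLt; omega⟩))).prod
      else 0) = MM q b n (Finset.univ : Finset (Fin (2*n))) := by
    have h0 := perm_sum_eq_MM q b n (fun x => x) (fun a c h => h)
    rw [Finset.image_id'] at h0
    exact h0
  rw [Finset.sum_filter, hL, mahonian q n]
  have hcard : (Finset.univ : Finset (Fin (2*n))).card = 2*n := by
    rw [Finset.card_univ, Fintype.card_fin]
  rw [MM_eq_cF_qPfAux q b hq hb n Finset.univ hcard]
  have hdiv : (Finset.univ : Finset (Fin (2*n))).card / 2 = n := by omega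
  rw [qPf, hdiv]
end

section
/- The quantum Pfaffian is the volume element of the 2-form Ω = Σ_{1≤i<j≤2n} b_{ij} (x_i ∧ x_j): one has ∧^n Ω = (Σ_{σ∈S_n} q^{4ℓ(σ)}) [1,2,...,2n] · x_1 ∧ x_2 ∧ ··· ∧ x_{2n} in B ⊗ Λ_{2n}. -/
lemma inversionNumber_eq_sum {k : ℕ} (σ : Equiv.Perm (Fin k)) :
    inversionNumber σ = ∑ a : Fin k, ∑ c : Fin k, if a < c ∧ σ c < σ a then 1 else 0 := by
  rw [inversionNumber, Finset.card_filter]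
  exact Fintype.sum_prod_type (f := fun p : Fin k × Fin k => if p.1 < p.2 ∧ σ p.2 < σ p.1 then (1:ℕ) else 0)

/-- insertion permutation: sends 0 to p, j.succ to p.succAbove (e j) -/
def insPerm {m : ℕ} (p : Fin (m+1)) (e : Equiv.Perm (Fin m)) : Equiv.Perm (Fin (m+1)) :=
  ((finSuccEquiv' (0 : Fin (m+1))).trans e.optionCongr).trans (finSuccEquiv' p).symm

lemma insPerm_zero {m : ℕ} (p : Fin (m+1)) (e : Equiv.Perm (Fin m)) :
    insPerm p e 0 = p := by
  simp [insPerm, finSuccEquiv'_at, finSuccEquiv'_symm_none]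

lemma insPerm_succ {m : ℕ} (p : Fin (m+1)) (e : Equiv.Perm (Fin m)) (j : Fin m) :
    insPerm p e j.succ = p.succAbove (e j) := by
  have h : (j.succ : Fin (m+1)) = (0 : Fin (m+1)).succAbove j := (Fin.zero_succAbove j).symm
  rw [insPerm]
  simp only [Equiv.trans_apply, h, finSuccEquiv'_succAbove, Equiv.optionCongr_apply,
    Option.map_some, finSuccEquiv'_symm_some]

lemma succAbove_lt_self_iff {m : ℕ} (p : Fin (m+1)) (v : Fin m) :
    p.succAbove v < p ↔ (v : ℕ) < (p : ℕ) := by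
  rcases lt_or_ge ((v : ℕ)) ((p : ℕ)) with h | h
  · rw [Fin.succAbove_of_castSucc_lt _ _ (by simpa [Fin.lt_def] using h)]
    simp [Fin.lt_def, h]
  · rw [Fin.succAbove_of_le_castSucc _ _ (by simpa [Fin.le_def] using h)]
    simp only [Fin.lt_def, Fin.val_succ]
    omega

lemma inversionNumber_insPerm {m : ℕ} (p : Fin (m+1)) (e : Equiv.Perm (Fin m)) :
    inversionNumber (insPerm p e) = (p : ℕ) + inversionNumber e := by
  rw [inversionNumber_eq_sum, Fin.sum_univ_succ]
  have h1 : (∑ c : Fin (m+1), if 0 < c ∧ insPerm p e c < insPerm p e 0 then 1 else 0)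
      = (p : ℕ) := by
    rw [Fin.sum_univ_succ]
    simp only [lt_self_iff_false, false_and, if_false, zero_add]
    have h3 : ∀ j : Fin m, (if (0 : Fin (m+1)) < j.succ ∧ insPerm p e j.succ < insPerm p e 0
        then 1 else 0) = (if ((e j : ℕ) < (p : ℕ)) then 1 else 0) := by
      intro j
      rw [insPerm_succ, insPerm_zero]
      simp [Fin.succ_pos, succAbove_lt_self_iff]
    rw [Finset.sum_congr rfl (fun j _ => h3 j)]
    rw [Equiv.sum_comp e (fun v : Fin m => if ((v : ℕ) < (p : ℕ)) then 1 else 0)]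
    rw [Fin.sum_univ_eq_sum_range (fun i => if i < (p : ℕ) then 1 else 0)]
    rw [← Finset.card_filter]
    have h4 : (Finset.range m).filter (· < (p : ℕ)) = Finset.range p := by
      ext i
      simp only [Finset.mem_filter, Finset.mem_range]
      have := p.isLt
      omega
    rw [h4, Finset.card_range]
  have h2 : ∀ a : Fin m, (∑ c : Fin (m+1), if a.succ < c ∧ insPerm p e c < insPerm p e a.succ
      then 1 else 0) = ∑ c : Fin m, if a < c ∧ e c < e a then 1 else 0 := by
    intro a
    rw [Fin.sum_univ_succ]
    simp only [Fin.not_lt_zero, false_and, if_false, zero_add, insPerm_succ,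
      Fin.succ_lt_succ_iff, Fin.succAbove_lt_succAbove_iff]
  rw [h1, Finset.sum_congr rfl (fun a _ => h2 a), ← inversionNumber_eq_sum]

lemma insPerm_bijective {m : ℕ} :
    Function.Bijective (fun z : Fin (m+1) × Equiv.Perm (Fin m) => insPerm z.1 z.2) := by
  rw [Fintype.bijective_iff_injective_and_card]
  constructor
  · rintro ⟨p, e⟩ ⟨p', e'⟩ h
    simp only at h
    have hp : p = p' := by
      rw [← insPerm_zero p e, ← insPerm_zero p' e', h]
    subst hp
    have he : e = e' := Equiv.ext fun j => Fin.succAbove_right_injective (by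
      have := congrArg (fun σ : Equiv.Perm (Fin (m+1)) => σ j.succ) h
      simpa only [insPerm_succ] using this)
    subst he; rfl
  · simp [Fintype.card_perm, Nat.factorial_succ]

lemma perm_sum_q {F : Type*} [CommSemiring F] (t : F) :
    ∀ n : ℕ, (∑ τ : Equiv.Perm (Fin n), t ^ (inversionNumber τ))
      = ∏ k ∈ Finset.range n, (∑ j ∈ Finset.range (k+1), t ^ j) := by
  intro n
  induction n with
  | zero =>
    rw [Finset.prod_range_zero]
    rw [show (Finset.univ : Finset (Equiv.Perm (Fin 0))) = {1} by
      apply Finset.eq_singleton_iff_unique_mem.mpr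
      exact ⟨Finset.mem_univ _, fun σ _ => Equiv.ext (fun i => i.elim0)⟩]
    rw [Finset.sum_singleton]
    rw [show inversionNumber (1 : Equiv.Perm (Fin 0)) = 0 by
      rw [inversionNumber, Finset.card_eq_zero, Finset.filter_eq_empty_iff]
      exact fun p _ => p.1.elim0]
    exact pow_zero t
  | succ n ih =>
    rw [← Fintype.sum_bijective _ insPerm_bijective _
      (fun τ => t ^ (inversionNumber τ)) (fun z => rfl)]
    rw [Fintype.sum_prod_type]
    have h5 : ∀ p : Fin (n+1), ∑ e : Equiv.Perm (Fin n), t ^ inversionNumber (insPerm p e)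
        = t ^ (p : ℕ) * ∑ e : Equiv.Perm (Fin n), t ^ inversionNumber e := by
      intro p
      rw [Finset.mul_sum]
      refine Finset.sum_congr rfl (fun e _ => ?_)
      rw [inversionNumber_insPerm, pow_add]
    rw [Finset.sum_congr rfl (fun p _ => h5 p), ← Finset.sum_mul, ih,
      Finset.prod_range_succ, mul_comm]
    congr 1
    rw [Fin.sum_univ_eq_sum_range (fun i => t ^ i)]

section P2
variable {F : Type*} [Field F] {E : Type*} [Ring E] [Algebra F E] {N : ℕ}

/-- ordered product of `x` over a finset -/
def Xw (x : Fin N → E) (S : Finset (Fin N)) : E := ((S.sort (·≤·)).map x).prod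

/-- the 2-form restricted to `S` -/
def pairsF (S : Finset (Fin N)) : Finset (Fin N × Fin N) :=
  (S ×ˢ S).filter fun p => p.1 < p.2

def Om (b : Fin N → Fin N → E) (x : Fin N → E) (S : Finset (Fin N)) : E :=
  ∑ p ∈ pairsF S, b p.1 p.2 * (x p.1 * x p.2)

lemma mem_pairsF {S : Finset (Fin N)} {p : Fin N × Fin N} :
    p ∈ pairsF S ↔ p.1 ∈ S ∧ p.2 ∈ S ∧ p.1 < p.2 := by
  simp [pairsF, Finset.mem_filter, Finset.mem_product, and_assoc]

variable (q : F) (x : Fin N → E)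

lemma xmul_list (hx1 : ∀ i, x i * x i = 0)
    (hx2 : ∀ i j, i < j → x j * x i = (-q) • (x i * x j)) :
    ∀ (l : List (Fin N)), l.Pairwise (· < ·) → ∀ i, i ∉ l →
    x i * (l.map x).prod = (-q) ^ (l.countP (fun a => a < i)) •
      ((List.orderedInsert (· ≤ ·) i l).map x).prod := by
  intro l
  induction l with
  | nil => intro _ i _; simp
  | cons a l ih =>
    intro hs i hi
    have hne : i ≠ a := fun h => hi (h ▸ List.mem_cons_self)
    have hs' : l.Pairwise (· < ·) := hs.of_cons
    have hal : ∀ c ∈ l, a < c := fun c hc => (List.pairwise_cons.mp hs).1 c hc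
    rcases lt_or_gt_of_ne hne with hlt | hgt
    · -- i < a : insert at front
      have hcount : (a :: l).countP (fun c => decide (c < i)) = 0 := by
        rw [List.countP_eq_zero]
        intro c hc
        rcases List.mem_cons.mp hc with rfl | hc
        · simpa using not_lt.mpr hlt.le
        · simpa using not_lt.mpr ((hlt.trans (hal c hc)).le)
      have hins : List.orderedInsert (· ≤ ·) i (a :: l) = i :: a :: l := by
        rw [List.orderedInsert]
        simp [hlt.le]
      rw [hins, hcount, pow_zero, one_smul]
      simp [List.map_cons, List.prod_cons]
    · -- a < i
      have hins : List.orderedInsert (· ≤ ·) i (a :: l) =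
          a :: List.orderedInsert (· ≤ ·) i l := by
        rw [List.orderedInsert]
        simp [not_le.mpr hgt]
      have hcount : (a :: l).countP (fun c => decide (c < i)) =
          l.countP (fun c => decide (c < i)) + 1 := by
        rw [List.countP_cons]
        simp [hgt]
      have hswap : x i * x a = (-q) • (x a * x i) := hx2 a i hgt
      have hi' : i ∉ l := fun h => hi (List.mem_cons_of_mem a h)
      calc x i * ((a :: l).map x).prod
          = (x i * x a) * (l.map x).prod := by
            rw [List.map_cons, List.prod_cons, mul_assoc]
        _ = (-q) • (x a * (x i * (l.map x).prod)) := by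
            rw [hswap, smul_mul_assoc, mul_assoc]
        _ = (-q) • (x a * ((-q) ^ (l.countP (fun c => decide (c < i))) •
              ((List.orderedInsert (· ≤ ·) i l).map x).prod)) := by
            rw [ih hs' i hi']
        _ = (-q) ^ ((a :: l).countP (fun c => decide (c < i))) •
              ((List.orderedInsert (· ≤ ·) i (a :: l)).map x).prod := by
            rw [hins, hcount, List.map_cons, List.prod_cons, mul_smul_comm,
              smul_smul, pow_succ, mul_comm]

lemma sort_insert_eq {S : Finset (Fin N)} {i : Fin N} (hi : i ∉ S) :
    (insert i S).sort (· ≤ ·) = List.orderedInsert (· ≤ ·) i (S.sort (· ≤ ·)) := by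
  apply List.Perm.eq_of_pairwise' (Finset.pairwise_sort _ _)
    (List.Pairwise.orderedInsert (r := (· ≤ ·)) i _ (Finset.pairwise_sort _ _))
  refine (Finset.sort_perm_toList (insert i S) _).trans ?_
  refine ((Finset.toList_insert hi).trans ?_).trans
    (List.perm_orderedInsert _ i _).symm
  exact List.Perm.cons i (Finset.sort_perm_toList S _).symm

lemma countP_sort_eq_card_filter (S : Finset (Fin N)) (p : Fin N → Prop) [DecidablePred p] :
    (S.sort (· ≤ ·)).countP (fun a => decide (p a)) = (S.filter p).card := by
  rw [(Finset.sort_perm_toList S _).countP_eq]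
  rw [← Multiset.coe_countP, Finset.coe_toList, Multiset.countP_eq_card_filter]
  rfl

lemma xmul_X (hx1 : ∀ i, x i * x i = 0)
    (hx2 : ∀ i j, i < j → x j * x i = (-q) • (x i * x j))
    {S : Finset (Fin N)} {i : Fin N} (hi : i ∉ S) :
    x i * Xw x S = (-q) ^ ((S.filter (· < i)).card) • Xw x (insert i S) := by
  rw [Xw, Xw, xmul_list q x hx1 hx2 _ (S.sortedLT_sort.pairwise) i (by simp [Finset.mem_sort, hi]),
    sort_insert_eq hi, countP_sort_eq_card_filter]

def kills (x : Fin N → E) (W : E) (T : Finset (Fin N)) : Prop :=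
  ∀ t ∈ T, ∀ a : E, W * (x t * a) = 0

lemma kills_mul_x (hq : q ≠ 0) (hx1 : ∀ i, x i * x i = 0)
    (hx2 : ∀ i j, i < j → x j * x i = (-q) • (x i * x j))
    {W : E} {T : Finset (Fin N)} (hW : kills x W T) (i : Fin N) :
    kills x (W * x i) T := by
  intro t ht a
  rcases eq_or_ne i t with rfl | hne
  · rw [mul_assoc, ← mul_assoc (x i), hx1, zero_mul, mul_zero]
  · obtain ⟨c, hc⟩ : ∃ c : F, x i * x t = c • (x t * x i) := by
      rcases lt_or_gt_of_ne hne with h | h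
      · refine ⟨(-q)⁻¹, ?_⟩
        rw [hx2 i t h, smul_smul, inv_mul_cancel₀ (neg_ne_zero.mpr hq), one_smul]
      · exact ⟨-q, hx2 t i h⟩
    have h2 : x i * (x t * a) = c • (x t * (x i * a)) := by
      rw [← mul_assoc, hc, smul_mul_assoc, mul_assoc]
    rw [mul_assoc, h2, mul_smul_comm, hW t ht, smul_zero]

lemma kills_x_self (hx1 : ∀ i, x i * x i = 0) (i : Fin N) :
    kills x (x i) {i} := by
  intro t ht a
  rw [Finset.mem_singleton] at ht
  subst ht
  rw [← mul_assoc, hx1, zero_mul]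

lemma kills_xx (hq : q ≠ 0) (hx1 : ∀ i, x i * x i = 0)
    (hx2 : ∀ i j, i < j → x j * x i = (-q) • (x i * x j))
    (p1 p2 : Fin N) :
    kills x (x p1 * x p2) {p1, p2} := by
  intro t ht a
  rcases Finset.mem_insert.mp ht with rfl | ht
  · exact kills_mul_x q x hq hx1 hx2 (kills_x_self x hx1 t) p2 t
      (Finset.mem_singleton_self t) a
  · rw [Finset.mem_singleton] at ht
    subst ht
    rw [mul_assoc, ← mul_assoc (x t), hx1, zero_mul, mul_zero]

lemma W_mul_om_pow (b : Fin N → Fin N → E) {W : E}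
    (hWb : ∀ i j, W * b i j = b i j * W) (S : Finset (Fin N)) (k : ℕ) :
    W * (Om b x S) ^ (k+1)
      = ∑ p ∈ pairsF S, b p.1 p.2 * ((W * x p.1 * x p.2) * (Om b x S) ^ k) := by
  rw [pow_succ', ← mul_assoc, Om, Finset.mul_sum, Finset.sum_mul]
  refine Finset.sum_congr rfl (fun p _ => ?_)
  have h1 : W * (b p.1 p.2 * (x p.1 * x p.2)) = b p.1 p.2 * (W * x p.1 * x p.2) := by
    rw [← mul_assoc, hWb, mul_assoc, ← mul_assoc W]
  rw [h1, mul_assoc]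

lemma om_pow_reduce (hq : q ≠ 0) (hx1 : ∀ i, x i * x i = 0)
    (hx2 : ∀ i j, i < j → x j * x i = (-q) • (x i * x j))
    (b : Fin N → Fin N → E) (hcomm : ∀ i j k, b i j * x k = x k * b i j) :
    ∀ (k : ℕ) (S T : Finset (Fin N)) (W : E),
    (∀ i j, W * b i j = b i j * W) → kills x W T →
    W * (Om b x S) ^ k = W * (Om b x (S \ T)) ^ k := by
  intro k
  induction k with
  | zero => intro S T W _ _; simp
  | succ k ih =>
    intro S T W hWb hW
    rw [W_mul_om_pow x b hWb, W_mul_om_pow x b hWb]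
    rw [← Finset.sum_filter_add_sum_filter_not (pairsF S) (fun p => p.1 ∈ T ∨ p.2 ∈ T)]
    have hzero : ∀ p ∈ (pairsF S).filter (fun p => p.1 ∈ T ∨ p.2 ∈ T),
        b p.1 p.2 * ((W * x p.1 * x p.2) * (Om b x S) ^ k) = 0 := by
      intro p hp
      rcases (Finset.mem_filter.mp hp).2 with h1 | h2
      · have : (W * x p.1 * x p.2) * (Om b x S) ^ k
            = W * (x p.1 * (x p.2 * (Om b x S) ^ k)) := by
          rw [mul_assoc, mul_assoc]
        rw [this, hW p.1 h1, mul_zero]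
      · have hk : kills x (W * x p.1) T := kills_mul_x q x hq hx1 hx2 hW p.1
        have : (W * x p.1 * x p.2) * (Om b x S) ^ k
            = (W * x p.1) * (x p.2 * (Om b x S) ^ k) := by
          rw [mul_assoc]
        rw [this, hk p.2 h2, mul_zero]
    rw [Finset.sum_eq_zero hzero, zero_add]
    have hset : (pairsF S).filter (fun p => ¬(p.1 ∈ T ∨ p.2 ∈ T)) = pairsF (S \ T) := by
      ext p
      simp only [Finset.mem_filter, mem_pairsF, Finset.mem_sdiff, not_or]
      tauto
    rw [hset]
    refine Finset.sum_congr rfl (fun p _ => ?_)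
    congr 1
    have hWb' : ∀ i j, (W * x p.1 * x p.2) * b i j = b i j * (W * x p.1 * x p.2) := by
      intro i j
      rw [mul_assoc, ← hcomm, ← mul_assoc, mul_assoc W, ← hcomm, ← mul_assoc, hWb,
        mul_assoc, mul_assoc, mul_assoc]
    have hWk : kills x (W * x p.1 * x p.2) T :=
      kills_mul_x q x hq hx1 hx2 (kills_mul_x q x hq hx1 hx2 hW p.1) p.2
    exact ih S T (W * x p.1 * x p.2) hWb' hWk

-- qPf lemmas
variable (b : Fin N → Fin N → E)

lemma commute_qPfAux (hcomm : ∀ i j k, b i j * x k = x k * b i j) (t : Fin N) :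
    ∀ (m : ℕ) (s : Finset (Fin N)), Commute (x t) (qPfAux q b m s) := by
  intro m
  induction m with
  | zero => intro s; exact Commute.one_right _
  | succ m ih =>
    intro s
    rw [qPfAux]
    split_ifs with h
    · refine Commute.sum_right _ _ _ (fun j _ => ?_)
      exact ((show Commute (x t) (b _ _) from (hcomm _ _ t).symm).mul_right (ih _)).smul_right _
    · exact Commute.zero_right _

lemma commute_qPf (hcomm : ∀ i j k, b i j * x k = x k * b i j) (t : Fin N)
    (s : Finset (Fin N)) : Commute (x t) (qPf q b s) :=
  commute_qPfAux q x b hcomm t _ s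

lemma qPfAux_step {m : ℕ} {s : Finset (Fin N)} (hcard : s.card = 2*(m+1)) :
    qPfAux q b (m+1) s
      = ∑ j ∈ s.erase (s.min' (Finset.card_pos.mp (by omega))),
          (-q) ^ ((s.filter (· < j)).card - 1) •
            (b (s.min' (Finset.card_pos.mp (by omega))) j *
              qPf q b ((s.erase (s.min' (Finset.card_pos.mp (by omega)))).erase j)) := by
  have hne : s.Nonempty := Finset.card_pos.mp (by omega)
  rw [qPfAux, dif_pos hne]
  refine Finset.sum_congr rfl (fun j hj => ?_)
  have hmem : s.min' hne ∈ s := s.min'_mem hne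
  have hcard2 : ((s.erase (s.min' hne)).erase j).card = 2 * m := by
    rw [Finset.card_erase_of_mem hj, Finset.card_erase_of_mem hmem, hcard]
    omega
  rw [qPf, hcard2, show 2*m/2 = m from by omega]

lemma qPf_expand {m : ℕ} {s : Finset (Fin N)} (hcard : s.card = 2*(m+1)) :
    qPf q b s
      = ∑ j ∈ s.erase (s.min' (Finset.card_pos.mp (by omega))),
          (-q) ^ ((s.filter (· < j)).card - 1) •
            (b (s.min' (Finset.card_pos.mp (by omega))) j *
              qPf q b ((s.erase (s.min' (Finset.card_pos.mp (by omega)))).erase j)) := by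
  rw [qPf, show s.card / 2 = m + 1 from by rw [hcard]; omega]
  exact qPfAux_step q b hcard

-- triples and reindexing
def triplesF (T : Finset (Fin N)) : Finset (Fin N × Fin N × Fin N) :=
  (T ×ˢ T ×ˢ T).filter fun t => t.1 < t.2.1 ∧ t.2.1 < t.2.2

lemma mem_triplesF {T : Finset (Fin N)} {t : Fin N × Fin N × Fin N} :
    t ∈ triplesF T ↔ t.1 ∈ T ∧ t.2.1 ∈ T ∧ t.2.2 ∈ T ∧ t.1 < t.2.1 ∧ t.2.1 < t.2.2 := by
  simp [triplesF, Finset.mem_filter, Finset.mem_product, and_assoc]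

section Reindex
variable {T : Finset (Fin N)} (F : Fin N → Fin N → Fin N → E)

lemma sum_lo_pairs :
    ∑ p ∈ pairsF T, ∑ k ∈ T.filter (· < p.1), F p.1 p.2 k
      = ∑ t ∈ triplesF T, F t.2.1 t.2.2 t.1 := by
  rw [Finset.sum_sigma' (pairsF T) _ (fun p k => F p.1 p.2 k)]
  refine Finset.sum_nbij' (fun z => (z.2, z.1.1, z.1.2)) (fun t => ⟨(t.2.1, t.2.2), t.1⟩)
    ?_ ?_ ?_ ?_ ?_
  · rintro ⟨p, k⟩ hz
    simp only [Finset.mem_sigma, mem_pairsF, Finset.mem_filter] at hz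
    exact mem_triplesF.mpr ⟨hz.2.1, hz.1.1, hz.1.2.1, hz.2.2, hz.1.2.2⟩
  · intro t ht
    rw [mem_triplesF] at ht
    simp only [Finset.mem_sigma, mem_pairsF, Finset.mem_filter]
    exact ⟨⟨ht.2.1, ht.2.2.1, ht.2.2.2.2⟩, ht.1, ht.2.2.2.1⟩
  · rintro ⟨p, k⟩ _; rfl
  · intro t _; rfl
  · rintro ⟨p, k⟩ _; rfl

lemma sum_mid_pairs :
    ∑ p ∈ pairsF T, ∑ k ∈ T.filter (fun c => p.1 < c ∧ c < p.2), F p.1 p.2 k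
      = ∑ t ∈ triplesF T, F t.1 t.2.2 t.2.1 := by
  rw [Finset.sum_sigma' (pairsF T) _ (fun p k => F p.1 p.2 k)]
  refine Finset.sum_nbij' (fun z => (z.1.1, z.2, z.1.2)) (fun t => ⟨(t.1, t.2.2), t.2.1⟩)
    ?_ ?_ ?_ ?_ ?_
  · rintro ⟨p, k⟩ hz
    simp only [Finset.mem_sigma, mem_pairsF, Finset.mem_filter] at hz
    exact mem_triplesF.mpr ⟨hz.1.1, hz.2.1, hz.1.2.1, hz.2.2.1, hz.2.2.2⟩
  · intro t ht
    rw [mem_triplesF] at ht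
    simp only [Finset.mem_sigma, mem_pairsF, Finset.mem_filter]
    exact ⟨⟨ht.1, ht.2.2.1, ht.2.2.2.1.trans ht.2.2.2.2⟩, ht.2.1,
      ht.2.2.2.1, ht.2.2.2.2⟩
  · rintro ⟨p, k⟩ _; rfl
  · intro t _; rfl
  · rintro ⟨p, k⟩ _; rfl

lemma sum_hi_pairs :
    ∑ p ∈ pairsF T, ∑ k ∈ T.filter (fun c => p.2 < c), F p.1 p.2 k
      = ∑ t ∈ triplesF T, F t.1 t.2.1 t.2.2 := by
  rw [Finset.sum_sigma' (pairsF T) _ (fun p k => F p.1 p.2 k)]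
  refine Finset.sum_nbij' (fun z => (z.1.1, z.1.2, z.2)) (fun t => ⟨(t.1, t.2.1), t.2.2⟩)
    ?_ ?_ ?_ ?_ ?_
  · rintro ⟨p, k⟩ hz
    simp only [Finset.mem_sigma, mem_pairsF, Finset.mem_filter] at hz
    exact mem_triplesF.mpr ⟨hz.1.1, hz.1.2.1, hz.2.1, hz.1.2.2, hz.2.2⟩
  · intro t ht
    rw [mem_triplesF] at ht
    simp only [Finset.mem_sigma, mem_pairsF, Finset.mem_filter]
    exact ⟨⟨ht.1, ht.2.1, ht.2.2.2.1⟩, ht.2.2.1, ht.2.2.2.2⟩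
  · rintro ⟨p, k⟩ _; rfl
  · intro t _; rfl
  · rintro ⟨p, k⟩ _; rfl

lemma sum_k_lo :
    ∑ k ∈ T, ∑ p ∈ (pairsF T).filter (fun p => k < p.1), F k p.1 p.2
      = ∑ t ∈ triplesF T, F t.1 t.2.1 t.2.2 := by
  rw [Finset.sum_sigma' T (fun k => (pairsF T).filter (fun p => k < p.1))
    (fun k p => F k p.1 p.2)]
  refine Finset.sum_nbij' (fun z => (z.1, z.2.1, z.2.2)) (fun t => ⟨t.1, (t.2.1, t.2.2)⟩)
    ?_ ?_ ?_ ?_ ?_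
  · rintro ⟨k, p⟩ hz
    simp only [Finset.mem_sigma, mem_pairsF, Finset.mem_filter] at hz
    exact mem_triplesF.mpr ⟨hz.1, hz.2.1.1, hz.2.1.2.1, hz.2.2, hz.2.1.2.2⟩
  · intro t ht
    rw [mem_triplesF] at ht
    simp only [Finset.mem_sigma, mem_pairsF, Finset.mem_filter]
    exact ⟨ht.1, ⟨ht.2.1, ht.2.2.1, ht.2.2.2.2⟩, ht.2.2.2.1⟩
  · rintro ⟨k, p⟩ _; rfl
  · intro t _; rfl
  · rintro ⟨k, p⟩ _; rfl

lemma sum_k_mid :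
    ∑ k ∈ T, ∑ p ∈ (pairsF T).filter (fun p => p.1 < k ∧ k < p.2), F k p.1 p.2
      = ∑ t ∈ triplesF T, F t.2.1 t.1 t.2.2 := by
  rw [Finset.sum_sigma' T (fun k => (pairsF T).filter (fun p => p.1 < k ∧ k < p.2))
    (fun k p => F k p.1 p.2)]
  refine Finset.sum_nbij' (fun z => (z.2.1, z.1, z.2.2)) (fun t => ⟨t.2.1, (t.1, t.2.2)⟩)
    ?_ ?_ ?_ ?_ ?_
  · rintro ⟨k, p⟩ hz
    simp only [Finset.mem_sigma, mem_pairsF, Finset.mem_filter] at hz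
    exact mem_triplesF.mpr ⟨hz.2.1.1, hz.1, hz.2.1.2.1, hz.2.2.1, hz.2.2.2⟩
  · intro t ht
    rw [mem_triplesF] at ht
    simp only [Finset.mem_sigma, mem_pairsF, Finset.mem_filter]
    exact ⟨ht.2.1, ⟨ht.1, ht.2.2.1, ht.2.2.2.1.trans ht.2.2.2.2⟩,
      ht.2.2.2.1, ht.2.2.2.2⟩
  · rintro ⟨k, p⟩ _; rfl
  · intro t _; rfl
  · rintro ⟨k, p⟩ _; rfl

lemma sum_k_hi :
    ∑ k ∈ T, ∑ p ∈ (pairsF T).filter (fun p => p.2 < k), F k p.1 p.2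
      = ∑ t ∈ triplesF T, F t.2.2 t.1 t.2.1 := by
  rw [Finset.sum_sigma' T (fun k => (pairsF T).filter (fun p => p.2 < k))
    (fun k p => F k p.1 p.2)]
  refine Finset.sum_nbij' (fun z => (z.2.1, z.2.2, z.1)) (fun t => ⟨t.2.2, (t.1, t.2.1)⟩)
    ?_ ?_ ?_ ?_ ?_
  · rintro ⟨k, p⟩ hz
    simp only [Finset.mem_sigma, mem_pairsF, Finset.mem_filter] at hz
    exact mem_triplesF.mpr ⟨hz.2.1.1, hz.2.1.2.1, hz.1, hz.2.1.2.2, hz.2.2⟩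
  · intro t ht
    rw [mem_triplesF] at ht
    simp only [Finset.mem_sigma, mem_pairsF, Finset.mem_filter]
    exact ⟨ht.2.2.1, ⟨ht.1, ht.2.1, ht.2.2.2.1⟩, ht.2.2.2.2⟩
  · rintro ⟨k, p⟩ _; rfl
  · intro t _; rfl
  · rintro ⟨k, p⟩ _; rfl

end Reindex

-- rank helper lemmas
lemma card_filter_erase_lt {S : Finset (Fin N)} {u w : Fin N} (hu : u ∈ S) (huw : u < w) :
    ((S.erase u).filter (· < w)).card = (S.filter (· < w)).card - 1 := by
  rw [Finset.filter_erase, Finset.card_erase_of_mem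
    (show u ∈ S.filter (fun x => x < w) from Finset.mem_filter.mpr ⟨hu, huw⟩)]

lemma filter_erase_ge {S : Finset (Fin N)} {u w : Fin N} (h : ¬ u < w) :
    (S.erase u).filter (· < w) = S.filter (· < w) := by
  rw [Finset.filter_erase, Finset.erase_eq_of_notMem
    (show u ∉ S.filter (fun x => x < w) from
      fun hm => h (Finset.mem_filter.mp hm).2)]

lemma min'_erase_erase {S : Finset (Fin N)} (hne : S.Nonempty) {i j : Fin N}
    (hi : i ∈ S.erase (S.min' hne)) (hj : j ∈ S.erase (S.min' hne))
    (h' : ((S.erase i).erase j).Nonempty) :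
    ((S.erase i).erase j).min' h' = S.min' hne := by
  apply le_antisymm
  · apply Finset.min'_le
    rw [Finset.mem_erase, Finset.mem_erase]
    exact ⟨(Finset.mem_erase.mp hj).1.symm, (Finset.mem_erase.mp hi).1.symm,
      S.min'_mem hne⟩
  · exact Finset.le_min' _ _ _ (fun y hy =>
      S.min'_le y (Finset.mem_of_mem_erase (Finset.mem_of_mem_erase hy)))

lemma min'_lt_of_mem_erase {S : Finset (Fin N)} (hne : S.Nonempty) {j : Fin N}
    (hj : j ∈ S.erase (S.min' hne)) : S.min' hne < j :=
  lt_of_le_of_ne (S.min'_le j (Finset.mem_of_mem_erase hj))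
    (Ne.symm (Finset.mem_erase.mp hj).1)

lemma hbN (hq : q ≠ 0)
    (hb : ∀ i j k l : Fin N, i < j → j < k → k < l →
      b i j * b k l + (-q) • (b i k * b j l) + (-q) ^ 2 • (b i l * b j k)
        = b k l * b i j + (-q) ^ (-1 : ℤ) • (b j l * b i k)
            + (-q) ^ (-2 : ℤ) • (b j k * b i l))
    {i j k l : Fin N} (hij : i < j) (hjk : j < k) (hkl : k < l) (e : ℕ) (P : E) :
    (-q)^(e+4) • (b k l * (b i j * P)) + (-q)^(e+3) • (b j l * (b i k * P))
      + (-q)^(e+2) • (b j k * (b i l * P))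
    = (-q)^(e+4) • (b i j * (b k l * P)) + (-q)^(e+5) • (b i k * (b j l * P))
      + (-q)^(e+6) • (b i l * (b j k * P)) := by
  have hu : (-q) ≠ 0 := neg_ne_zero.mpr hq
  have h2 := congrArg (fun z : E => (-q)^(e+4) • (z * P)) (hb i j k l hij hjk hkl)
  simp only [add_mul, smul_mul_assoc, smul_add, smul_smul, mul_assoc] at h2
  rw [show (-q)^(e+4) * (-q) = (-q)^(e+5) from (pow_succ _ _).symm] at h2
  rw [show (-q)^(e+4) * (-q)^2 = (-q)^(e+6) from by rw [← pow_add]] at h2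
  rw [show (-q)^(e+4) * (-q)^(-1:ℤ) = (-q)^(e+3) from by
    rw [← zpow_natCast (-q) (e+4), ← zpow_add₀ hu,
      show ((e+4:ℕ):ℤ) + (-1) = ((e+3:ℕ):ℤ) by push_cast; ring, zpow_natCast]] at h2
  rw [show (-q)^(e+4) * (-q)^(-2:ℤ) = (-q)^(e+2) from by
    rw [← zpow_natCast (-q) (e+4), ← zpow_add₀ hu,
      show ((e+4:ℕ):ℤ) + (-2) = ((e+2:ℕ):ℤ) by push_cast; ring, zpow_natCast]] at h2
  exact h2.symm

-- the two summand shapes appearing in the Laplace expansion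
def Hfun (q : F) (b : Fin N → Fin N → E) (S : Finset (Fin N)) (a : Fin N) :
    Fin N → Fin N → Fin N → E := fun i j k =>
  (-q) ^ ((S.filter (· < i)).card + ((S.erase i).filter (· < j)).card
      + ((((S.erase i).erase j).filter (· < k)).card - 1)) •
    (b i j * (b a k * qPf q b ((((S.erase a).erase i).erase j).erase k)))

def Kfun (q : F) (b : Fin N → Fin N → E) (S : Finset (Fin N)) (a : Fin N) :
    Fin N → Fin N → Fin N → E := fun k i j =>
  (-q) ^ (((S.filter (· < k)).card - 1)
      + ((((S.erase a).erase k).filter (· < i)).card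
      + (((((S.erase a).erase k).erase i)).filter (· < j)).card)) •
    (q ^ 4 • (b a k * (b i j * qPf q b (((((S.erase a).erase k).erase i).erase j)))))

lemma triple_id (hq : q ≠ 0)
    (hb : ∀ i j k l : Fin N, i < j → j < k → k < l →
      b i j * b k l + (-q) • (b i k * b j l) + (-q) ^ 2 • (b i l * b j k)
        = b k l * b i j + (-q) ^ (-1 : ℤ) • (b j l * b i k)
            + (-q) ^ (-2 : ℤ) • (b j k * b i l))
    {S : Finset (Fin N)} {a u v w : Fin N}
    (haS : a ∈ S) (huS : u ∈ S) (hvS : v ∈ S) (hwS : w ∈ S)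
    (hau : a < u) (huv : u < v) (hvw : v < w) :
    Hfun q b S a v w u + (Hfun q b S a u w v + Hfun q b S a u v w)
      = Kfun q b S a u v w + (Kfun q b S a v u w + Kfun q b S a w u v) := by
  have hav : a < v := hau.trans huv
  have haw : a < w := hav.trans hvw
  have huw : u < w := huv.trans hvw
  have huSa : u ∈ S.erase a := Finset.mem_erase.mpr ⟨ne_of_gt hau, huS⟩
  have hvSa : v ∈ S.erase a := Finset.mem_erase.mpr ⟨ne_of_gt hav, hvS⟩
  have hwSa : w ∈ S.erase a := Finset.mem_erase.mpr ⟨ne_of_gt haw, hwS⟩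
  have hvSu : v ∈ S.erase u := Finset.mem_erase.mpr ⟨ne_of_gt huv, hvS⟩
  have hvSau : v ∈ (S.erase a).erase u := Finset.mem_erase.mpr ⟨ne_of_gt huv, hvSa⟩
  have huSav : u ∈ (S.erase a).erase v := Finset.mem_erase.mpr ⟨ne_of_lt huv, huSa⟩
  have huSaw : u ∈ (S.erase a).erase w := Finset.mem_erase.mpr ⟨ne_of_lt huw, huSa⟩
  simp only [Hfun, Kfun]
  -- canonical deleted set
  have hs1 : (((S.erase a).erase v).erase w).erase u
      = (((S.erase a).erase u).erase v).erase w := by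
    ext y; simp only [Finset.mem_erase]; tauto
  have hs2 : (((S.erase a).erase u).erase w).erase v
      = (((S.erase a).erase u).erase v).erase w := by
    ext y; simp only [Finset.mem_erase]; tauto
  have hs3 : (((S.erase a).erase v).erase u).erase w
      = (((S.erase a).erase u).erase v).erase w := by
    ext y; simp only [Finset.mem_erase]; tauto
  have hs4 : (((S.erase a).erase w).erase u).erase v
      = (((S.erase a).erase u).erase v).erase w := by
    ext y; simp only [Finset.mem_erase]; tauto
  rw [hs1, hs2, hs3, hs4]
  -- card computations
  have k1 : ((S.erase v).filter (· < w)).card = (S.filter (· < w)).card - 1 :=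
    card_filter_erase_lt hvS hvw
  have k2 : ((S.erase v).erase w).filter (· < u) = S.filter (· < u) := by
    rw [filter_erase_ge (not_lt.mpr huw.le), filter_erase_ge (not_lt.mpr huv.le)]
  have k3 : ((S.erase u).filter (· < w)).card = (S.filter (· < w)).card - 1 :=
    card_filter_erase_lt huS huw
  have k4 : ((S.erase u).erase w).filter (· < v) = (S.erase u).filter (· < v) :=
    filter_erase_ge (not_lt.mpr hvw.le)
  have k5 : ((S.erase u).filter (· < v)).card = (S.filter (· < v)).card - 1 :=
    card_filter_erase_lt huS huv
  have k6 : (((S.erase u).erase v).filter (· < w)).card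
      = ((S.erase u).filter (· < w)).card - 1 := card_filter_erase_lt hvSu hvw
  have k7 : ((S.erase a).filter (· < u)).card = (S.filter (· < u)).card - 1 :=
    card_filter_erase_lt haS hau
  have k8 : ((S.erase a).filter (· < v)).card = (S.filter (· < v)).card - 1 :=
    card_filter_erase_lt haS hav
  have k9 : ((S.erase a).filter (· < w)).card = (S.filter (· < w)).card - 1 :=
    card_filter_erase_lt haS haw
  have k10 : (((S.erase a).erase u).filter (· < v)).card
      = ((S.erase a).filter (· < v)).card - 1 := card_filter_erase_lt huSa huv
  have k11 : ((((S.erase a).erase u).erase v).filter (· < w)).card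
      = (((S.erase a).erase u).filter (· < w)).card - 1 :=
    card_filter_erase_lt hvSau hvw
  have k12 : (((S.erase a).erase u).filter (· < w)).card
      = ((S.erase a).filter (· < w)).card - 1 := card_filter_erase_lt huSa huw
  have k13 : ((S.erase a).erase v).filter (· < u) = (S.erase a).filter (· < u) :=
    filter_erase_ge (not_lt.mpr huv.le)
  have k14 : ((((S.erase a).erase v).erase u).filter (· < w)).card
      = (((S.erase a).erase v).filter (· < w)).card - 1 :=
    card_filter_erase_lt huSav huw
  have k15 : (((S.erase a).erase v).filter (· < w)).card
      = ((S.erase a).filter (· < w)).card - 1 := card_filter_erase_lt hvSa hvw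
  have k16 : ((S.erase a).erase w).filter (· < u) = (S.erase a).filter (· < u) :=
    filter_erase_ge (not_lt.mpr huw.le)
  have k17 : ((((S.erase a).erase w).erase u).filter (· < v)).card
      = (((S.erase a).erase w).filter (· < v)).card - 1 :=
    card_filter_erase_lt huSaw huv
  have k18 : ((S.erase a).erase w).filter (· < v) = (S.erase a).filter (· < v) :=
    filter_erase_ge (not_lt.mpr hvw.le)
  rw [k2, k4, k13, k16]
  rw [k1, k6, k10, k11, k14, k17]
  rw [k3, k5, k12, k15, k18]
  rw [k7, k8, k9]
  -- bounds
  have b1 : 1 ≤ (S.filter (· < u)).card :=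
    Finset.card_pos.mpr ⟨a, Finset.mem_filter.mpr ⟨haS, hau⟩⟩
  have b2 : 2 ≤ (S.filter (· < v)).card := by
    have hsub : ({a, u} : Finset (Fin N)) ⊆ S.filter (· < v) := by
      intro y hy
      rcases Finset.mem_insert.mp hy with rfl | hy
      · exact Finset.mem_filter.mpr ⟨haS, hav⟩
      · rw [Finset.mem_singleton] at hy; subst hy
        exact Finset.mem_filter.mpr ⟨huS, huv⟩
    have hc2 : ({a, u} : Finset (Fin N)).card = 2 := by
      rw [Finset.card_insert_of_notMem (by simp [ne_of_lt hau]), Finset.card_singleton]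
    exact hc2 ▸ Finset.card_le_card hsub
  have b3 : 3 ≤ (S.filter (· < w)).card := by
    have hsub : ({a, u, v} : Finset (Fin N)) ⊆ S.filter (· < w) := by
      intro y hy
      rcases Finset.mem_insert.mp hy with rfl | hy
      · exact Finset.mem_filter.mpr ⟨haS, haw⟩
      rcases Finset.mem_insert.mp hy with rfl | hy
      · exact Finset.mem_filter.mpr ⟨huS, huw⟩
      · rw [Finset.mem_singleton] at hy; subst hy
        exact Finset.mem_filter.mpr ⟨hvS, hvw⟩
    have hc3 : ({a, u, v} : Finset (Fin N)).card = 3 := by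
      rw [Finset.card_insert_of_notMem (by simp [ne_of_lt hau, ne_of_lt hav]),
        Finset.card_insert_of_notMem (by simp [ne_of_lt huv]), Finset.card_singleton]
    exact hc3 ▸ Finset.card_le_card hsub
  obtain ⟨e, he⟩ : ∃ e, (S.filter (· < u)).card + (S.filter (· < v)).card
      + (S.filter (· < w)).card = e + 6 :=
    ⟨(S.filter (· < u)).card + (S.filter (· < v)).card + (S.filter (· < w)).card - 6,
      by omega⟩
  rw [show (S.filter (· < v)).card + ((S.filter (· < w)).card - 1)
      + ((S.filter (· < u)).card - 1) = e + 4 from by omega]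
  rw [show (S.filter (· < u)).card + ((S.filter (· < w)).card - 1)
      + (((S.filter (· < v)).card - 1) - 1) = e + 3 from by omega]
  rw [show (S.filter (· < u)).card + ((S.filter (· < v)).card - 1)
      + ((S.filter (· < w)).card - 1 - 1 - 1) = e + 2 from by omega]
  rw [show (S.filter (· < u)).card - 1 + (((S.filter (· < v)).card - 1) - 1
      + ((((S.filter (· < w)).card - 1) - 1) - 1)) = e from by omega]
  rw [show (S.filter (· < v)).card - 1 + ((S.filter (· < u)).card - 1
      + ((((S.filter (· < w)).card - 1) - 1) - 1)) = e + 1 from by omega]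
  rw [show (S.filter (· < w)).card - 1 + ((S.filter (· < u)).card - 1
      + (((S.filter (· < v)).card - 1) - 1)) = e + 2 from by omega]
  have hsm : ∀ (s : ℕ) (W : E), (-q)^s • (q^4 • W) = (-q)^(s+4) • W := by
    intro s W
    rw [smul_smul, show (-q)^s * q^4 = (-q)^(s+4) from by rw [pow_add]; ring]
  rw [hsm, hsm, hsm, ← add_assoc, ← add_assoc]
  exact hbN q b hq hb hau huv hvw e _

lemma laplace_split {m : ℕ} {S : Finset (Fin N)} (hcard : S.card = 2*(m+1)) :
    (∑ p ∈ pairsF S,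
        (-q) ^ ((S.filter (· < p.1)).card + ((S.erase p.1).filter (· < p.2)).card) •
          (b p.1 p.2 * qPf q b ((S.erase p.1).erase p.2)))
      = qPf q b S
        + ∑ p ∈ pairsF (S.erase (S.min' (Finset.card_pos.mp (by omega)))),
            (-q) ^ ((S.filter (· < p.1)).card + ((S.erase p.1).filter (· < p.2)).card) •
              (b p.1 p.2 * qPf q b ((S.erase p.1).erase p.2)) := by
  have hne : S.Nonempty := Finset.card_pos.mp (by omega)
  have haS : S.min' hne ∈ S := S.min'_mem hne
  rw [← Finset.sum_filter_add_sum_filter_not (pairsF S) (fun p => p.1 = S.min' hne)]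
  congr 1
  · -- these are the leading terms: they give exactly qPf S
    rw [qPf_expand q b hcard]
    refine Finset.sum_nbij' (fun p => p.2) (fun c => (S.min' hne, c)) ?_ ?_ ?_ ?_ ?_
    · intro p hp
      obtain ⟨hpp, hp1⟩ := Finset.mem_filter.mp hp
      obtain ⟨h1, h2, hlt⟩ := mem_pairsF.mp hpp
      exact Finset.mem_erase.mpr ⟨ne_of_gt (hp1 ▸ hlt), h2⟩
    · intro c hc
      refine Finset.mem_filter.mpr ⟨mem_pairsF.mpr ⟨haS, Finset.mem_of_mem_erase hc,
        min'_lt_of_mem_erase hne hc⟩, rfl⟩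
    · intro p hp
      obtain ⟨hpp, hp1⟩ := Finset.mem_filter.mp hp
      exact Prod.ext hp1.symm rfl
    · intro c _; rfl
    · intro p hp
      obtain ⟨hpp, hp1⟩ := Finset.mem_filter.mp hp
      obtain ⟨h1, h2, hlt⟩ := mem_pairsF.mp hpp
      obtain ⟨p1, p2⟩ := p
      simp only at hp1 hlt ⊢
      subst hp1
      rw [show S.filter (· < S.min' hne) = ∅ from Finset.filter_eq_empty_iff.mpr
          (fun _y hy => not_lt.mpr (S.min'_le _ hy)),
        Finset.card_empty, zero_add,
        card_filter_erase_lt haS hlt]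
  · -- remaining pairs avoid the minimum
    congr 1
    ext p
    simp only [Finset.mem_filter, mem_pairsF, Finset.mem_erase]
    constructor
    · rintro ⟨⟨h1, h2, hlt⟩, hne1⟩
      exact ⟨⟨hne1, h1⟩, ⟨ne_of_gt ((S.min'_le p.1 h1).trans_lt hlt), h2⟩, hlt⟩
    · rintro ⟨⟨hne1, h1⟩, ⟨hne2, h2⟩, hlt⟩
      exact ⟨⟨h1, h2, hlt⟩, hne1⟩

lemma laplace_step (hq : q ≠ 0)
    (hb : ∀ i j k l : Fin N, i < j → j < k → k < l →
      b i j * b k l + (-q) • (b i k * b j l) + (-q) ^ 2 • (b i l * b j k)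
        = b k l * b i j + (-q) ^ (-1 : ℤ) • (b j l * b i k)
            + (-q) ^ (-2 : ℤ) • (b j k * b i l))
    {m : ℕ} {S : Finset (Fin N)} (hne : S.Nonempty)
    (hcard : S.card = 2*(m+1)+2)
    (IH : ∀ S' : Finset (Fin N), S'.card = 2*(m+1) →
      (∑ p ∈ pairsF S',
        (-q) ^ ((S'.filter (· < p.1)).card + ((S'.erase p.1).filter (· < p.2)).card) •
          (b p.1 p.2 * qPf q b ((S'.erase p.1).erase p.2)))
        = (∑ k ∈ Finset.range (m+1), q ^ (4*k)) • qPf q b S') :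
    (∑ p ∈ pairsF (S.erase (S.min' hne)),
        (-q) ^ ((S.filter (· < p.1)).card + ((S.erase p.1).filter (· < p.2)).card) •
          (b p.1 p.2 * qPf q b ((S.erase p.1).erase p.2)))
      = (q^4 * ∑ k ∈ Finset.range (m+1), q ^ (4*k)) • qPf q b S := by
  have haS : S.min' hne ∈ S := S.min'_mem hne
  -- Step A : expand the inner Pfaffian
  have stepA : ∀ p ∈ pairsF (S.erase (S.min' hne)),
      (-q) ^ ((S.filter (· < p.1)).card + ((S.erase p.1).filter (· < p.2)).card) •
          (b p.1 p.2 * qPf q b ((S.erase p.1).erase p.2))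
        = ∑ k ∈ ((S.erase (S.min' hne)).erase p.1).erase p.2,
            Hfun q b S (S.min' hne) p.1 p.2 k := by
    intro p hp
    obtain ⟨hp1, hp2, hplt⟩ := mem_pairsF.mp hp
    have hp1S : p.1 ∈ S := Finset.mem_of_mem_erase hp1
    have hp2S : p.2 ∈ S := Finset.mem_of_mem_erase hp2
    have hne12 : p.1 ≠ p.2 := ne_of_lt hplt
    have hcard' : ((S.erase p.1).erase p.2).card = 2*(m+1) := by
      rw [Finset.card_erase_of_mem (Finset.mem_erase.mpr ⟨hne12.symm, hp2S⟩),
        Finset.card_erase_of_mem hp1S, hcard]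
      omega
    have hne' : ((S.erase p.1).erase p.2).Nonempty := Finset.card_pos.mp (by omega)
    have hmin : ((S.erase p.1).erase p.2).min' hne' = S.min' hne :=
      min'_erase_erase hne hp1 hp2 hne'
    rw [qPf_expand q b hcard', hmin]
    rw [Finset.mul_sum, Finset.smul_sum]
    rw [show (((S.erase p.1).erase p.2).erase (S.min' hne))
        = ((S.erase (S.min' hne)).erase p.1).erase p.2 from by
      ext y; simp only [Finset.mem_erase]; tauto]
    refine Finset.sum_congr rfl (fun k hk => ?_)
    rw [mul_smul_comm, smul_smul, ← pow_add]
    rfl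
  rw [Finset.sum_congr rfl stepA]
  -- Step B : split the inner sum into three ranges
  have stepB : ∀ p ∈ pairsF (S.erase (S.min' hne)),
      (∑ k ∈ ((S.erase (S.min' hne)).erase p.1).erase p.2,
          Hfun q b S (S.min' hne) p.1 p.2 k)
        = (∑ k ∈ (S.erase (S.min' hne)).filter (· < p.1),
              Hfun q b S (S.min' hne) p.1 p.2 k)
          + ((∑ k ∈ (S.erase (S.min' hne)).filter (fun c => p.1 < c ∧ c < p.2),
              Hfun q b S (S.min' hne) p.1 p.2 k)
            + (∑ k ∈ (S.erase (S.min' hne)).filter (fun c => p.2 < c),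
              Hfun q b S (S.min' hne) p.1 p.2 k)) := by
    intro p hp
    obtain ⟨hp1, hp2, hplt⟩ := mem_pairsF.mp hp
    have hU : ((S.erase (S.min' hne)).erase p.1).erase p.2
        = ((S.erase (S.min' hne)).filter (· < p.1))
          ∪ (((S.erase (S.min' hne)).filter (fun c => p.1 < c ∧ c < p.2))
            ∪ ((S.erase (S.min' hne)).filter (fun c => p.2 < c))) := by
      ext y
      simp only [Finset.mem_erase, Finset.mem_union, Finset.mem_filter]
      constructor
      · rintro ⟨hne2, hne1, hyT⟩
        rcases lt_trichotomy y p.1 with h | h | h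
        · exact Or.inl ⟨hyT, h⟩
        · exact absurd h hne1
        · rcases lt_trichotomy y p.2 with g | g | g
          · exact Or.inr (Or.inl ⟨hyT, h, g⟩)
          · exact absurd g hne2
          · exact Or.inr (Or.inr ⟨hyT, g⟩)
      · rintro (⟨hyT, h⟩ | ⟨hyT, h, g⟩ | ⟨hyT, g⟩)
        · exact ⟨ne_of_lt (h.trans hplt), ne_of_lt h, hyT⟩
        · exact ⟨ne_of_lt g, ne_of_gt h, hyT⟩
        · exact ⟨ne_of_gt g, ne_of_gt (hplt.trans g), hyT⟩
    have dB : Disjoint ((S.erase (S.min' hne)).filter (fun c => p.1 < c ∧ c < p.2))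
        ((S.erase (S.min' hne)).filter (fun c => p.2 < c)) := by
      rw [Finset.disjoint_left]
      intro y hy1 hy2
      simp only [Finset.mem_filter, Fin.lt_def] at hy1 hy2
      omega
    have dA : Disjoint ((S.erase (S.min' hne)).filter (· < p.1))
        (((S.erase (S.min' hne)).filter (fun c => p.1 < c ∧ c < p.2))
          ∪ ((S.erase (S.min' hne)).filter (fun c => p.2 < c))) := by
      rw [Finset.disjoint_left]
      intro y hy1 hy2
      rcases Finset.mem_union.mp hy2 with hy2 | hy2 <;>
        simp only [Finset.mem_filter, Fin.lt_def] at hy1 hy2 <;> omega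
    rw [hU, Finset.sum_union dA, Finset.sum_union dB]
  rw [Finset.sum_congr rfl stepB, Finset.sum_add_distrib, Finset.sum_add_distrib,
    sum_lo_pairs (Hfun q b S (S.min' hne)), sum_mid_pairs (Hfun q b S (S.min' hne)),
    sum_hi_pairs (Hfun q b S (S.min' hne))]
  -- now develop the right hand side
  have hTcard : ∀ j ∈ S.erase (S.min' hne),
      ((S.erase (S.min' hne)).erase j).card = 2*(m+1) := by
    intro j hj
    rw [Finset.card_erase_of_mem hj, Finset.card_erase_of_mem haS, hcard]
    omega
  have hexp : qPf q b S = ∑ j ∈ S.erase (S.min' hne),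
      (-q) ^ ((S.filter (· < j)).card - 1) •
        (b (S.min' hne) j * qPf q b ((S.erase (S.min' hne)).erase j)) :=
    qPf_expand q b (show S.card = 2*((m+1)+1) from by omega)
  have stepR : ∀ j ∈ S.erase (S.min' hne),
      (q^4 * ∑ k ∈ Finset.range (m+1), q ^ (4*k)) •
          ((-q) ^ ((S.filter (· < j)).card - 1) •
            (b (S.min' hne) j * qPf q b ((S.erase (S.min' hne)).erase j)))
        = ∑ p ∈ pairsF ((S.erase (S.min' hne)).erase j),
            Kfun q b S (S.min' hne) j p.1 p.2 := by
    intro j hj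
    have hIH := IH ((S.erase (S.min' hne)).erase j) (hTcard j hj)
    have e1 : (q ^ 4 * ∑ k ∈ Finset.range (m + 1), q ^ (4 * k)) •
        ((-q) ^ ((S.filter (· < j)).card - 1) •
          (b (S.min' hne) j * qPf q b ((S.erase (S.min' hne)).erase j)))
        = (-q) ^ ((S.filter (· < j)).card - 1) •
          (q ^ 4 • (b (S.min' hne) j *
            ((∑ k ∈ Finset.range (m + 1), q ^ (4 * k)) •
              qPf q b ((S.erase (S.min' hne)).erase j)))) := by
      rw [mul_smul_comm, smul_smul, smul_smul, smul_smul]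
      congr 1
      ring
    rw [e1, ← hIH, Finset.mul_sum, Finset.smul_sum, Finset.smul_sum]
    refine Finset.sum_congr rfl (fun p hp => ?_)
    simp only [Kfun, mul_smul_comm, smul_smul]
    congr 1
    rw [pow_add]
    ring
  have rhs1 : (q^4 * ∑ k ∈ Finset.range (m+1), q ^ (4*k)) • qPf q b S
      = ∑ j ∈ S.erase (S.min' hne), ∑ p ∈ pairsF ((S.erase (S.min' hne)).erase j),
          Kfun q b S (S.min' hne) j p.1 p.2 := by
    rw [hexp, Finset.smul_sum]
    exact Finset.sum_congr rfl stepR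
  have stepC : ∀ j ∈ S.erase (S.min' hne),
      (∑ p ∈ pairsF ((S.erase (S.min' hne)).erase j),
          Kfun q b S (S.min' hne) j p.1 p.2)
        = (∑ p ∈ (pairsF (S.erase (S.min' hne))).filter (fun p => j < p.1),
              Kfun q b S (S.min' hne) j p.1 p.2)
          + ((∑ p ∈ (pairsF (S.erase (S.min' hne))).filter
                (fun p => p.1 < j ∧ j < p.2), Kfun q b S (S.min' hne) j p.1 p.2)
            + (∑ p ∈ (pairsF (S.erase (S.min' hne))).filter (fun p => p.2 < j),
              Kfun q b S (S.min' hne) j p.1 p.2)) := by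
    intro j hj
    have hU2 : pairsF ((S.erase (S.min' hne)).erase j)
        = ((pairsF (S.erase (S.min' hne))).filter (fun p => j < p.1))
          ∪ (((pairsF (S.erase (S.min' hne))).filter (fun p => p.1 < j ∧ j < p.2))
            ∪ ((pairsF (S.erase (S.min' hne))).filter (fun p => p.2 < j))) := by
      ext p
      simp only [mem_pairsF, Finset.mem_erase, Finset.mem_union, Finset.mem_filter]
      constructor
      · rintro ⟨⟨hne1, h1⟩, ⟨hne2, h2⟩, hlt⟩
        rcases lt_trichotomy j p.1 with h | h | h
        · exact Or.inl ⟨⟨h1, h2, hlt⟩, h⟩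
        · exact absurd h.symm hne1
        · rcases lt_trichotomy j p.2 with g | g | g
          · exact Or.inr (Or.inl ⟨⟨h1, h2, hlt⟩, h, g⟩)
          · exact absurd g.symm hne2
          · exact Or.inr (Or.inr ⟨⟨h1, h2, hlt⟩, g⟩)
      · rintro (⟨⟨h1, h2, hlt⟩, h⟩ | ⟨⟨h1, h2, hlt⟩, h, g⟩ | ⟨⟨h1, h2, hlt⟩, g⟩)
        · exact ⟨⟨ne_of_gt h, h1⟩, ⟨ne_of_gt (h.trans hlt), h2⟩, hlt⟩
        · exact ⟨⟨ne_of_lt h, h1⟩, ⟨ne_of_gt g, h2⟩, hlt⟩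
        · exact ⟨⟨ne_of_lt (hlt.trans g), h1⟩, ⟨ne_of_lt g, h2⟩, hlt⟩
    have dB : Disjoint ((pairsF (S.erase (S.min' hne))).filter
          (fun p => p.1 < j ∧ j < p.2))
        ((pairsF (S.erase (S.min' hne))).filter (fun p => p.2 < j)) := by
      rw [Finset.disjoint_left]
      intro y hy1 hy2
      simp only [Finset.mem_filter, Fin.lt_def] at hy1 hy2
      omega
    have dA : Disjoint ((pairsF (S.erase (S.min' hne))).filter (fun p => j < p.1))
        (((pairsF (S.erase (S.min' hne))).filter (fun p => p.1 < j ∧ j < p.2))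
          ∪ ((pairsF (S.erase (S.min' hne))).filter (fun p => p.2 < j))) := by
      rw [Finset.disjoint_left]
      intro y hy1 hy2
      rcases Finset.mem_union.mp hy2 with hy2 | hy2 <;>
        simp only [Finset.mem_filter, Fin.lt_def] at hy1 hy2
      · omega
      · have := (mem_pairsF.mp hy1.1).2.2
        rw [Fin.lt_def] at this
        omega
    rw [hU2, Finset.sum_union dA, Finset.sum_union dB]
  rw [rhs1, Finset.sum_congr rfl stepC, Finset.sum_add_distrib, Finset.sum_add_distrib,
    sum_k_lo (Kfun q b S (S.min' hne)), sum_k_mid (Kfun q b S (S.min' hne)),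
    sum_k_hi (Kfun q b S (S.min' hne))]
  have hLHS : (∑ t ∈ triplesF (S.erase (S.min' hne)),
        Hfun q b S (S.min' hne) t.2.1 t.2.2 t.1)
      + ((∑ t ∈ triplesF (S.erase (S.min' hne)),
          Hfun q b S (S.min' hne) t.1 t.2.2 t.2.1)
        + (∑ t ∈ triplesF (S.erase (S.min' hne)),
          Hfun q b S (S.min' hne) t.1 t.2.1 t.2.2))
      = ∑ t ∈ triplesF (S.erase (S.min' hne)),
          (Hfun q b S (S.min' hne) t.2.1 t.2.2 t.1
            + (Hfun q b S (S.min' hne) t.1 t.2.2 t.2.1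
              + Hfun q b S (S.min' hne) t.1 t.2.1 t.2.2)) := by
    rw [Finset.sum_add_distrib, Finset.sum_add_distrib]
  have hRHS : (∑ t ∈ triplesF (S.erase (S.min' hne)),
        Kfun q b S (S.min' hne) t.1 t.2.1 t.2.2)
      + ((∑ t ∈ triplesF (S.erase (S.min' hne)),
          Kfun q b S (S.min' hne) t.2.1 t.1 t.2.2)
        + (∑ t ∈ triplesF (S.erase (S.min' hne)),
          Kfun q b S (S.min' hne) t.2.2 t.1 t.2.1))
      = ∑ t ∈ triplesF (S.erase (S.min' hne)),
          (Kfun q b S (S.min' hne) t.1 t.2.1 t.2.2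
            + (Kfun q b S (S.min' hne) t.2.1 t.1 t.2.2
              + Kfun q b S (S.min' hne) t.2.2 t.1 t.2.1)) := by
    rw [Finset.sum_add_distrib, Finset.sum_add_distrib]
  rw [hLHS, hRHS]
  refine Finset.sum_congr rfl (fun t ht => ?_)
  obtain ⟨h1, h2, h3, h12, h23⟩ := mem_triplesF.mp ht
  exact triple_id q b hq hb haS (Finset.mem_of_mem_erase h1)
    (Finset.mem_of_mem_erase h2) (Finset.mem_of_mem_erase h3)
    (min'_lt_of_mem_erase hne h1) h12 h23



lemma laplace (hq : q ≠ 0)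
    (hb : ∀ i j k l : Fin N, i < j → j < k → k < l →
      b i j * b k l + (-q) • (b i k * b j l) + (-q) ^ 2 • (b i l * b j k)
        = b k l * b i j + (-q) ^ (-1 : ℤ) • (b j l * b i k)
            + (-q) ^ (-2 : ℤ) • (b j k * b i l)) :
    ∀ (m : ℕ) (S : Finset (Fin N)), S.card = 2*(m+1) →
    (∑ p ∈ pairsF S,
        (-q) ^ ((S.filter (· < p.1)).card + ((S.erase p.1).filter (· < p.2)).card) •
          (b p.1 p.2 * qPf q b ((S.erase p.1).erase p.2)))
      = (∑ k ∈ Finset.range (m+1), q ^ (4*k)) • qPf q b S := by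
  intro m
  induction m with
  | zero =>
    intro S hcard
    rw [laplace_split q b hcard]
    have hne : S.Nonempty := Finset.card_pos.mp (by omega)
    have hT1 : (S.erase (S.min' hne)).card = 1 := by
      rw [Finset.card_erase_of_mem (S.min'_mem hne), hcard]
    have hemp : pairsF (S.erase (S.min' hne)) = ∅ := by
      rw [Finset.eq_empty_iff_forall_notMem]
      intro p hp
      obtain ⟨h1, h2, hlt⟩ := mem_pairsF.mp hp
      obtain ⟨c, hc⟩ := Finset.card_eq_one.mp hT1
      rw [hc, Finset.mem_singleton] at h1 h2
      rw [h1, h2] at hlt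
      exact lt_irrefl c hlt
    rw [hemp, Finset.sum_empty, add_zero, Finset.sum_range_one]
    rw [show q ^ (4*0) = 1 from by norm_num, one_smul]
  | succ m ih =>
    intro S hcard
    have hne : S.Nonempty := Finset.card_pos.mp (by omega)
    rw [laplace_split q b hcard]
    rw [laplace_step q b hq hb hne (by omega) ih]
    rw [Finset.sum_range_succ' (fun k => q ^ (4*k)) (m+1)]
    rw [show (∑ k ∈ Finset.range (m+1), q^(4*(k+1)))
        = q^4 * ∑ k ∈ Finset.range (m+1), q^(4*k) from by
      rw [Finset.mul_sum]
      refine Finset.sum_congr rfl (fun k _ => ?_)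
      rw [← pow_add]
      congr 1
      omega]
    rw [show q ^ (4*0) = 1 from by norm_num, add_smul, one_smul, add_comm]

lemma xx_commute_qPf (hcomm : ∀ i j k, b i j * x k = x k * b i j)
    (i j : Fin N) (s : Finset (Fin N)) (Y : E) :
    (x i * x j) * (qPf q b s * Y) = qPf q b s * ((x i * x j) * Y) := by
  have h1 : Commute (x i * x j) (qPf q b s) :=
    ((commute_qPf q x b hcomm i s).mul_left (commute_qPf q x b hcomm j s))
  rw [← mul_assoc, h1.eq, mul_assoc]

lemma main_ind (hq : q ≠ 0) (hx1 : ∀ i, x i * x i = 0)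
    (hx2 : ∀ i j, i < j → x j * x i = (-q) • (x i * x j))
    (hb : ∀ i j k l : Fin N, i < j → j < k → k < l →
      b i j * b k l + (-q) • (b i k * b j l) + (-q) ^ 2 • (b i l * b j k)
        = b k l * b i j + (-q) ^ (-1 : ℤ) • (b j l * b i k)
            + (-q) ^ (-2 : ℤ) • (b j k * b i l))
    (hcomm : ∀ i j k, b i j * x k = x k * b i j) :
    ∀ (m : ℕ) (S : Finset (Fin N)), S.card = 2*m →
    (Om b x S) ^ m
      = (∏ k ∈ Finset.range m, ∑ j ∈ Finset.range (k+1), q ^ (4*j)) •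
          (qPf q b S * Xw x S) := by
  intro m
  induction m with
  | zero =>
    intro S hcard
    have hS : S = ∅ := Finset.card_eq_zero.mp (by omega)
    subst hS
    rw [pow_zero, Finset.prod_range_zero, one_smul]
    rw [show qPf q b (∅ : Finset (Fin N)) = 1 from by rw [qPf, Finset.card_empty]; rfl]
    rw [show Xw x (∅ : Finset (Fin N)) = 1 from by
      rw [Xw, Finset.sort_empty]; rfl]
    rw [one_mul]
  | succ m ih =>
    intro S hcard
    have step1 : ∀ p ∈ pairsF S,
        b p.1 p.2 * (x p.1 * x p.2) * (Om b x S) ^ m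
          = (∏ k ∈ Finset.range m, ∑ j ∈ Finset.range (k+1), q ^ (4*j)) •
              (((-q) ^ ((S.filter (· < p.1)).card
                  + ((S.erase p.1).filter (· < p.2)).card) •
                (b p.1 p.2 * qPf q b ((S.erase p.1).erase p.2))) * Xw x S) := by
      intro p hp
      obtain ⟨h1, h2, hlt⟩ := mem_pairsF.mp hp
      have hne12 : p.1 ≠ p.2 := ne_of_lt hlt
      have h2e : p.2 ∈ S.erase p.1 := Finset.mem_erase.mpr ⟨hne12.symm, h2⟩
      have hWb : ∀ i j, (x p.1 * x p.2) * b i j = b i j * (x p.1 * x p.2) := by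
        intro i j
        rw [mul_assoc, ← hcomm, ← mul_assoc, ← hcomm, mul_assoc]
      have hred := om_pow_reduce q x hq hx1 hx2 b hcomm m S {p.1, p.2}
        (x p.1 * x p.2) hWb (kills_xx q x hq hx1 hx2 p.1 p.2)
      have hsd : S \ {p.1, p.2} = (S.erase p.1).erase p.2 := by
        ext y
        simp only [Finset.mem_sdiff, Finset.mem_insert, Finset.mem_singleton,
          Finset.mem_erase, not_or]
        tauto
      rw [hsd] at hred
      have hcard' : ((S.erase p.1).erase p.2).card = 2*m := by
        rw [Finset.card_erase_of_mem h2e, Finset.card_erase_of_mem h1, hcard]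
        omega
      rw [mul_assoc, hred, ih _ hcard']
      rw [mul_smul_comm, mul_smul_comm]
      congr 1
      rw [xx_commute_qPf q x b hcomm]
      -- now compute (x p.1 * x p.2) * Xw ((S.erase p.1).erase p.2)
      have hx2e : p.2 ∉ (S.erase p.1).erase p.2 := Finset.notMem_erase _ _
      have hx1e : p.1 ∉ S.erase p.1 := Finset.notMem_erase _ _
      have e2 : x p.2 * Xw x ((S.erase p.1).erase p.2)
          = (-q) ^ (((S.erase p.1).filter (· < p.2)).card) • Xw x (S.erase p.1) := by
        rw [xmul_X q x hx1 hx2 hx2e,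
          filter_erase_ge (lt_irrefl p.2), Finset.insert_erase h2e]
      have e1 : x p.1 * Xw x (S.erase p.1)
          = (-q) ^ ((S.filter (· < p.1)).card) • Xw x S := by
        rw [xmul_X q x hx1 hx2 hx1e,
          filter_erase_ge (show ¬ p.1 < p.1 from lt_irrefl p.1), Finset.insert_erase h1]
      rw [mul_assoc, e2, mul_smul_comm, e1, smul_smul, ← pow_add]
      rw [show ((S.erase p.1).filter (· < p.2)).card + (S.filter (· < p.1)).card
          = (S.filter (· < p.1)).card + ((S.erase p.1).filter (· < p.2)).card from by omega]
      rw [mul_smul_comm, mul_smul_comm, ← mul_assoc, smul_mul_assoc]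
    calc (Om b x S) ^ (m+1)
        = Om b x S * Om b x S ^ m := pow_succ' _ _
      _ = (∑ p ∈ pairsF S, b p.1 p.2 * (x p.1 * x p.2)) * Om b x S ^ m := rfl
      _ = ∑ p ∈ pairsF S, b p.1 p.2 * (x p.1 * x p.2) * Om b x S ^ m :=
          Finset.sum_mul _ _ _
      _ = ∑ p ∈ pairsF S,
            (∏ k ∈ Finset.range m, ∑ j ∈ Finset.range (k+1), q ^ (4*j)) •
              (((-q) ^ ((S.filter (· < p.1)).card
                  + ((S.erase p.1).filter (· < p.2)).card) •
                (b p.1 p.2 * qPf q b ((S.erase p.1).erase p.2))) * Xw x S) :=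
          Finset.sum_congr rfl step1
      _ = (∏ k ∈ Finset.range m, ∑ j ∈ Finset.range (k+1), q ^ (4*j)) •
            ((∑ p ∈ pairsF S,
              (-q) ^ ((S.filter (· < p.1)).card
                  + ((S.erase p.1).filter (· < p.2)).card) •
                (b p.1 p.2 * qPf q b ((S.erase p.1).erase p.2))) * Xw x S) := by
          rw [← Finset.smul_sum, ← Finset.sum_mul]
      _ = (∏ k ∈ Finset.range m, ∑ j ∈ Finset.range (k+1), q ^ (4*j)) •
            (((∑ k ∈ Finset.range (m+1), q ^ (4*k)) • qPf q b S) * Xw x S) := by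
          rw [laplace q b hq hb m S hcard]
      _ = (∏ k ∈ Finset.range (m+1), ∑ j ∈ Finset.range (k+1), q ^ (4*j)) •
            (qPf q b S * Xw x S) := by
          rw [smul_mul_assoc, smul_smul, Finset.prod_range_succ]

end P2


/-- the quantum Pfaffian is the volume element of the 2-form
`Ω = Σ_{i<j} b_{ij} x_i ∧ x_j`:
`∧ⁿ Ω = (Σ_{σ ∈ S_n} q^{4ℓ(σ)}) [1,…,2n] · x_1 ∧ ⋯ ∧ x_{2n}` in `B ⊗ Λ_{2n}`. -/
theorem quantum_pfaffian_volume_element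
    (F : Type*) [Field F] (q : F) (hq : q ≠ 0) (n : ℕ)
    (E : Type*) [Ring E] [Algebra F E]
    (x : Fin (2 * n) → E) (b : Fin (2 * n) → Fin (2 * n) → E)
    (hx1 : ∀ i, x i * x i = 0)
    (hx2 : ∀ i j, i < j → x j * x i = (-q) • (x i * x j))
    (hb : ∀ i j k l : Fin (2 * n), i < j → j < k → k < l →
      b i j * b k l + (-q) • (b i k * b j l) + (-q) ^ 2 • (b i l * b j k)
        = b k l * b i j + (-q) ^ (-1 : ℤ) • (b j l * b i k)
            + (-q) ^ (-2 : ℤ) • (b j k * b i l))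
    (hcomm : ∀ i j k, b i j * x k = x k * b i j) :
    (∑ p ∈ (Finset.univ : Finset (Fin (2 * n) × Fin (2 * n))).filter
        (fun p => p.1 < p.2), b p.1 p.2 * (x p.1 * x p.2)) ^ n
      = (∑ τ : Equiv.Perm (Fin n), q ^ (4 * inversionNumber τ)) •
          (qPf q b Finset.univ * ((List.finRange (2 * n)).map x).prod) := by
  have hcardU : (Finset.univ : Finset (Fin (2*n))).card = 2*n := by
    rw [Finset.card_univ, Fintype.card_fin]
  have hmain := main_ind q x b hq hx1 hx2 hb hcomm n Finset.univ hcardU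
  have hOm : Om b x (Finset.univ : Finset (Fin (2*n)))
      = ∑ p ∈ (Finset.univ : Finset (Fin (2*n) × Fin (2*n))).filter
          (fun p => p.1 < p.2), b p.1 p.2 * (x p.1 * x p.2) := by
    rw [Om, pairsF, Finset.univ_product_univ]
  have hX : Xw x (Finset.univ : Finset (Fin (2*n)))
      = ((List.finRange (2*n)).map x).prod := by
    rw [Xw]
    congr 1
    have hsortu : (Finset.univ : Finset (Fin (2*n))).sort (· ≤ ·)
        = List.finRange (2*n) := by
      apply List.Perm.eq_of_pairwise' (Finset.pairwise_sort _ _)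
        (List.pairwise_le_finRange _)
      refine (Finset.sort_perm_toList _ _).trans ?_
      apply List.perm_of_nodup_nodup_toFinset_eq (Finset.nodup_toList _)
        (List.nodup_finRange _)
      rw [Finset.toList_toFinset]
      ext y
      simp
    rw [hsortu]
  have hcoef : (∑ τ : Equiv.Perm (Fin n), q ^ (4 * inversionNumber τ))
      = ∏ k ∈ Finset.range n, ∑ j ∈ Finset.range (k+1), q ^ (4*j) := by
    calc ∑ τ : Equiv.Perm (Fin n), q ^ (4 * inversionNumber τ)
        = ∑ τ : Equiv.Perm (Fin n), (q^4) ^ (inversionNumber τ) := by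
          refine Finset.sum_congr rfl fun τ _ => ?_
          rw [← pow_mul]
      _ = ∏ k ∈ Finset.range n, ∑ j ∈ Finset.range (k+1), (q^4) ^ j :=
          perm_sum_q (q^4) n
      _ = ∏ k ∈ Finset.range n, ∑ j ∈ Finset.range (k+1), q ^ (4*j) := by
          refine Finset.prod_congr rfl fun k _ => Finset.sum_congr rfl fun j _ => ?_
          rw [← pow_mul]
  rw [← hOm, hmain, hX, hcoef]
end
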